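/- arXiv:math/0111067 — 6 statements merged into one kernel-verified Lean document; each statement's English description precedes it below -/
import Mathlib

section
/- Suppose s is a complex number such that the series Σ_𝔵 (w_t(𝔵)/l(𝔵)) e^{−s·w_t(𝔵)}, taken over all nonempty finite words 𝔵 over the alphabet {1,...,N}, converges absolutely. Then Σ_𝔵 (w_t(𝔵)/l(𝔵)) e^{−s·w_t(𝔵)} = Σ_𝔭 Σ_{k=1}^∞ w_t(𝔭) e^{−s·k·w_t(𝔭)}, where the outer sum on the right runs over all periodic orbits 𝔭 of the shift σ. -/
/-! Repeating a word of length `l` gives a sequence `b` with `σ^l b = b`, so `l = (k + 1) m` with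
`m` the minimal period of `b`, i.e. the size of the orbit `𝔭` of `b`. Words thus correspond to
triples `(𝔭, b ∈ 𝔭, k)`, and the word attached to such a triple has length `(k + 1) |𝔭|` and total
weight `(k + 1) w_t(𝔭)`. For fixed `𝔭` and `k` the `|𝔭|` choices of `b` give equal terms, which add
up to `w_t(𝔭) e^{-s (k + 1) w_t(𝔭)}`; absolute convergence allows the regrouping. -/

namespace SuspendedFlow

/-- The space of sequences over the alphabet `{1,...,N}`. -/
abbrev Sequences (N : ℕ) := ℕ → Fin N

/-- The left shift on sequences. -/
def shift {N : ℕ} (a : Sequences N) : Sequences N := fun n => a (n + 1)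

/-- Nonempty finite words over the alphabet `{1,...,N}`: a word of length `l + 1`. -/
abbrev Word (N : ℕ) := Σ l : ℕ, Fin (l + 1) → Fin N

/-- The length of a word. -/
def wordLen {N : ℕ} (x : Word N) : ℕ := x.1 + 1

/-- The periodic sequence obtained by repeating a finite word. -/
def periodize {N : ℕ} (x : Word N) : Sequences N :=
  fun n => x.2 ⟨n % (x.1 + 1), Nat.mod_lt n (Nat.succ_pos x.1)⟩

/-- Total weight of a finite word: `w(a) + w(σa) + ⋯ + w(σ^{l-1}a)`, where `a` is the
periodic sequence obtained by repeating the word. -/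
noncomputable def totalWeight {N : ℕ} (w : Sequences N → ℝ) (x : Word N) : ℝ :=
  ∑ i : Fin (x.1 + 1), w (shift^[(i : ℕ)] (periodize x))

/-- A finite set of sequences is a periodic orbit of the shift if it is the orbit of a
periodic sequence. -/
def IsPeriodicOrbit {N : ℕ} (p : Finset (Sequences N)) : Prop :=
  ∃ a : Sequences N, (∃ l : ℕ, 1 ≤ l ∧ shift^[l] a = a) ∧
    (p : Set (Sequences N)) = {b | ∃ k : ℕ, b = shift^[k] a}

/-- Total weight of a periodic orbit. -/
noncomputable def orbitWeight {N : ℕ} (w : Sequences N → ℝ) (p : Finset (Sequences N)) : ℝ :=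
  ∑ b ∈ p, w b

end SuspendedFlow

namespace Function

variable {α : Type*} {f : α → α} {x y : α}

variable (f) in
open Classical in
noncomputable def orbitFinset (x : α) : Finset α :=
  (periodicOrbit f x).toFinset

variable (f) in
open Classical in
lemma orbitFinset_eq_toFinset (x : α) :
    orbitFinset f x = ((List.range (minimalPeriod f x)).map fun n => f^[n] x).toFinset :=
  rfl

variable (f) in
lemma nodup_map_iterate_range (x : α) :
    ((List.range (minimalPeriod f x)).map fun n => f^[n] x).Nodup :=
  Cycle.nodup_coe_iff.1 nodup_periodicOrbit

lemma mem_orbitFinset_iff (hx : x ∈ periodicPts f) :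
    y ∈ orbitFinset f x ↔ ∃ n, f^[n] x = y := by
  classical
  rw [← mem_periodicOrbit_iff hx, orbitFinset_eq_toFinset, List.mem_toFinset, periodicOrbit,
    Cycle.mem_coe_iff]

lemma self_mem_orbitFinset (hx : x ∈ periodicPts f) : x ∈ orbitFinset f x :=
  (mem_orbitFinset_iff hx).2 ⟨0, rfl⟩

lemma mem_periodicPts_of_mem_orbitFinset (hx : x ∈ periodicPts f) (hy : y ∈ orbitFinset f x) :
    y ∈ periodicPts f := by
  obtain ⟨n, rfl⟩ := (mem_orbitFinset_iff hx).1 hy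
  obtain ⟨m, hm, hxm⟩ := hx
  exact ⟨m, hm, hxm.apply_iterate n⟩

lemma orbitFinset_eq_of_mem (hx : x ∈ periodicPts f) (hy : y ∈ orbitFinset f x) :
    orbitFinset f y = orbitFinset f x := by
  obtain ⟨n, rfl⟩ := (mem_orbitFinset_iff hx).1 hy
  rw [orbitFinset, orbitFinset, periodicOrbit_apply_iterate_eq hx]

variable (f) in
lemma card_orbitFinset (x : α) : (orbitFinset f x).card = minimalPeriod f x := by
  classical
  rw [orbitFinset_eq_toFinset, List.toFinset_card_of_nodup (nodup_map_iterate_range f x),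
    List.length_map, List.length_range]

variable (f) in
lemma sum_orbitFinset {M : Type*} [AddCommMonoid M] (g : α → M) (x : α) :
    ∑ y ∈ orbitFinset f x, g y = birkhoffSum f g (minimalPeriod f x) x := by
  classical
  rw [orbitFinset_eq_toFinset, List.sum_toFinset _ (nodup_map_iterate_range f x), List.map_map,
    birkhoffSum, Finset.sum_eq_multiset_sum, Finset.range_val, Multiset.range, Multiset.map_coe,
    Multiset.sum_coe]
  rfl

lemma IsPeriodicPt.birkhoffSum_mul {M : Type*} [AddCommMonoid M] {n : ℕ}
    (h : IsPeriodicPt f n x) (g : α → M) (k : ℕ) :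
    birkhoffSum f g (k * n) x = k • birkhoffSum f g n x := by
  induction k with
  | zero => simp
  | succ k ih => rw [add_mul, one_mul, birkhoffSum_add, ih, (h.const_mul k).eq, succ_nsmul]

lemma succ_mul_minimalPeriod_sub_one_add_one (hx : x ∈ periodicPts f) (k : ℕ) :
    (k + 1) * minimalPeriod f x - 1 + 1 = (k + 1) * minimalPeriod f x :=
  Nat.sub_add_cancel (Nat.mul_pos k.succ_pos (minimalPeriod_pos_of_mem_periodicPts hx))

/-- The periods of a periodic point `x` are the multiples `(k + 1) * minimalPeriod f x`; a
period `l + 1` is stored as `l` because `0` is excluded. -/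
noncomputable def sigmaIsPeriodicPtEquiv (f : α → α) :
    (Σ l : ℕ, {x // IsPeriodicPt f (l + 1) x}) ≃ periodicPts f × ℕ where
  toFun q := (⟨q.2, q.1 + 1, q.1.succ_pos, q.2.2⟩, (q.1 + 1) / minimalPeriod f q.2 - 1)
  invFun p := ⟨(p.2 + 1) * minimalPeriod f p.1 - 1, p.1, by
    rw [succ_mul_minimalPeriod_sub_one_add_one p.1.2]
    exact (isPeriodicPt_minimalPeriod f p.1).const_mul _⟩
  left_inv q := by
    obtain ⟨l, x, hx⟩ := q
    have hm := hx.minimalPeriod_pos l.succ_pos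
    have hq : 1 ≤ (l + 1) / minimalPeriod f x :=
      Nat.div_pos (Nat.le_of_dvd l.succ_pos hx.minimalPeriod_dvd) hm
    refine Sigma.subtype_ext ?_ rfl
    change ((l + 1) / minimalPeriod f x - 1 + 1) * minimalPeriod f x - 1 = l
    rw [Nat.sub_add_cancel hq, Nat.div_mul_cancel hx.minimalPeriod_dvd, Nat.add_sub_cancel]
  right_inv p := by
    obtain ⟨⟨x, hx⟩, k⟩ := p
    refine Prod.ext rfl ?_
    change ((k + 1) * minimalPeriod f x - 1 + 1) / minimalPeriod f x - 1 = k
    rw [succ_mul_minimalPeriod_sub_one_add_one hx,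
      Nat.mul_div_cancel _ (minimalPeriod_pos_of_mem_periodicPts hx), Nat.add_sub_cancel]

end Function

namespace SuspendedFlow

open Function

section Shift

variable {N : ℕ}

lemma shift_iterate_apply (a : Sequences N) (j n : ℕ) : (shift^[j] a) n = a (n + j) := by
  induction j generalizing a with
  | zero => rfl
  | succ j ih => rw [iterate_succ_apply, ih]; rfl

lemma isPeriodicPt_shift_iff {a : Sequences N} {n : ℕ} :
    IsPeriodicPt shift n a ↔ Periodic a n := by
  rw [IsPeriodicPt, IsFixedPt, funext_iff]
  simp only [shift_iterate_apply, Periodic]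

lemma isPeriodicPt_periodize (x : Word N) : IsPeriodicPt shift (wordLen x) (periodize x) :=
  isPeriodicPt_shift_iff.2 fun n => congrArg x.2 (Fin.ext (Nat.add_mod_right n _))

lemma totalWeight_eq_birkhoffSum (w : Sequences N → ℝ) (x : Word N) :
    totalWeight w x = birkhoffSum shift w (wordLen x) (periodize x) :=
  Fin.sum_univ_eq_sum_range (fun i => w (shift^[i] (periodize x))) _

def periodizeEquiv (N l : ℕ) :
    (Fin (l + 1) → Fin N) ≃ {a : Sequences N // IsPeriodicPt shift (l + 1) a} where
  toFun v := ⟨periodize ⟨l, v⟩, isPeriodicPt_periodize ⟨l, v⟩⟩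
  invFun a i := a.1 i
  left_inv v := funext fun i => congrArg v (Fin.ext (Nat.mod_eq_of_lt i.2))
  right_inv a := Subtype.ext <| funext (isPeriodicPt_shift_iff.1 a.2).map_mod_nat

noncomputable def wordEquivPeriodicPts (N : ℕ) : Word N ≃ periodicPts (shift (N := N)) × ℕ :=
  (Equiv.sigmaCongrRight (periodizeEquiv N)).trans (sigmaIsPeriodicPtEquiv shift)

lemma periodize_wordEquivPeriodicPts_symm (b : periodicPts (shift (N := N))) (k : ℕ) :
    periodize ((wordEquivPeriodicPts N).symm (b, k)) = b :=
  congrArg Subtype.val ((periodizeEquiv N _).apply_symm_apply _)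

lemma wordLen_wordEquivPeriodicPts_symm (b : periodicPts (shift (N := N))) (k : ℕ) :
    wordLen ((wordEquivPeriodicPts N).symm (b, k)) = (k + 1) * minimalPeriod shift b.1 :=
  succ_mul_minimalPeriod_sub_one_add_one b.2 k

end Shift

section Orbits

variable {N : ℕ}

lemma isPeriodicOrbit_iff {p : Finset (Sequences N)} :
    IsPeriodicOrbit p ↔ ∃ a ∈ periodicPts shift, orbitFinset shift a = p := by
  have coe_orbitFinset {a : Sequences N} (ha : a ∈ periodicPts shift) :
      (orbitFinset shift a : Set (Sequences N)) = {b | ∃ k, b = shift^[k] a} :=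
    Set.ext fun b => (mem_orbitFinset_iff ha).trans (exists_congr fun _ => eq_comm)
  constructor
  · rintro ⟨a, ha, hp⟩
    exact ⟨a, ha, Finset.coe_injective (by rw [coe_orbitFinset ha, hp])⟩
  · rintro ⟨a, ha, rfl⟩
    exact ⟨a, ha, coe_orbitFinset ha⟩

lemma IsPeriodicOrbit.mem_periodicPts {p : Finset (Sequences N)} (hp : IsPeriodicOrbit p)
    {b : Sequences N} (hb : b ∈ p) : b ∈ periodicPts shift := by
  obtain ⟨a, ha, rfl⟩ := isPeriodicOrbit_iff.1 hp
  exact mem_periodicPts_of_mem_orbitFinset ha hb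

lemma IsPeriodicOrbit.orbitFinset_eq {p : Finset (Sequences N)} (hp : IsPeriodicOrbit p)
    {b : Sequences N} (hb : b ∈ p) : orbitFinset shift b = p := by
  obtain ⟨a, ha, rfl⟩ := isPeriodicOrbit_iff.1 hp
  exact orbitFinset_eq_of_mem ha hb

lemma IsPeriodicOrbit.card_pos {p : Finset (Sequences N)} (hp : IsPeriodicOrbit p) :
    0 < p.card := by
  obtain ⟨a, ha, rfl⟩ := isPeriodicOrbit_iff.1 hp
  exact card_orbitFinset shift a ▸ minimalPeriod_pos_of_mem_periodicPts ha

abbrev PeriodicOrbits (N : ℕ) := {p : Finset (Sequences N) // IsPeriodicOrbit p}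

noncomputable def periodicPtsEquivSigmaOrbit (N : ℕ) :
    periodicPts (shift (N := N)) ≃ Σ p : PeriodicOrbits N, {b // b ∈ p.1} where
  toFun b :=
    ⟨⟨orbitFinset shift b, isPeriodicOrbit_iff.2 ⟨b, b.2, rfl⟩⟩, b, self_mem_orbitFinset b.2⟩
  invFun q := ⟨q.2, q.1.2.mem_periodicPts q.2.2⟩
  left_inv _ := rfl
  right_inv q := Sigma.subtype_ext (Subtype.ext (q.1.2.orbitFinset_eq q.2.2)) rfl

/-- A word is recorded by its periodization `b`, the orbit `p ∋ b`, and the number `k + 1` of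
times the word runs around `p`. -/
noncomputable def wordEquivSigmaOrbit (N : ℕ) :
    Word N ≃ Σ p : PeriodicOrbits N, {b // b ∈ p.1} × ℕ :=
  (wordEquivPeriodicPts N).trans
    ((Equiv.prodCongr (periodicPtsEquivSigmaOrbit N) (Equiv.refl ℕ)).trans
      (Equiv.sigmaProdDistrib _ _))

lemma wordEquivSigmaOrbit_symm_apply (p : PeriodicOrbits N) (b : {b // b ∈ p.1}) (k : ℕ) :
    (wordEquivSigmaOrbit N).symm ⟨p, (b, k)⟩
      = (wordEquivPeriodicPts N).symm (⟨b, p.2.mem_periodicPts b.2⟩, k) :=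
  rfl

lemma wordLen_wordEquivSigmaOrbit_symm (p : PeriodicOrbits N) (b : {b // b ∈ p.1}) (k : ℕ) :
    wordLen ((wordEquivSigmaOrbit N).symm ⟨p, (b, k)⟩) = (k + 1) * p.1.card := by
  rw [wordEquivSigmaOrbit_symm_apply, wordLen_wordEquivPeriodicPts_symm, ← card_orbitFinset,
    p.2.orbitFinset_eq b.2]

lemma totalWeight_wordEquivSigmaOrbit_symm (w : Sequences N → ℝ) (p : PeriodicOrbits N)
    (b : {b // b ∈ p.1}) (k : ℕ) :
    totalWeight w ((wordEquivSigmaOrbit N).symm ⟨p, (b, k)⟩) = (k + 1) * orbitWeight w p.1 := by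
  rw [wordEquivSigmaOrbit_symm_apply, totalWeight_eq_birkhoffSum,
    wordLen_wordEquivPeriodicPts_symm, periodize_wordEquivPeriodicPts_symm,
    (isPeriodicPt_minimalPeriod shift b.1).birkhoffSum_mul, nsmul_eq_mul, ← sum_orbitFinset,
    p.2.orbitFinset_eq b.2, orbitWeight, Nat.cast_succ]

end Orbits

theorem euler_sum_general (N : ℕ) (w : Sequences N → ℝ) (s : ℂ)
    (habs : Summable fun x : Word N =>
      ‖((totalWeight w x : ℂ) / (wordLen x : ℂ)) * Complex.exp (-s * (totalWeight w x : ℂ))‖) :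
    ∑' x : Word N,
        ((totalWeight w x : ℂ) / (wordLen x : ℂ)) * Complex.exp (-s * (totalWeight w x : ℂ))
      = ∑' (p : {p : Finset (Sequences N) // IsPeriodicOrbit p}) (k : ℕ),
          (orbitWeight w p.1 : ℂ) *
            Complex.exp (-s * ((k : ℂ) + 1) * (orbitWeight w p.1 : ℂ)) := by
  set F : Word N → ℂ := fun x =>
    ((totalWeight w x : ℂ) / (wordLen x : ℂ)) * Complex.exp (-s * (totalWeight w x : ℂ))
  set e := (wordEquivSigmaOrbit N).symm
  have hsum : Summable (F ∘ e) := e.summable_iff.2 habs.of_norm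
  calc ∑' x, F x = ∑' c, (F ∘ e) c := (e.tsum_eq F).symm
    _ = ∑' p, ∑' c, (F ∘ e) ⟨p, c⟩ := hsum.tsum_sigma
    _ = _ := tsum_congr fun p => ?_
  have hcard : (p.1.card : ℂ) ≠ 0 := Nat.cast_ne_zero.2 p.2.card_pos.ne'
  rw [(hsum.sigma_factor p).tsum_prod]
  simp only [comp_apply, F, e, totalWeight_wordEquivSigmaOrbit_symm,
    wordLen_wordEquivSigmaOrbit_symm]
  -- the summand no longer depends on the point `b ∈ p`
  rw [tsum_const, Nat.card_eq_fintype_card, Fintype.card_coe, nsmul_eq_mul, ← tsum_mul_left]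
  refine tsum_congr fun k => ?_
  push_cast
  field_simp

/-- Euler sum: the sum over all nonempty finite words of `(w_t(x)/l(x)) e^{-s w_t(x)}`
equals the sum over all periodic orbits `p` of `∑_{k ≥ 1} w_t(p) e^{-s k w_t(p)}`. -/
theorem euler_sum (N : ℕ) (hN : 1 ≤ N) (w : Sequences N → ℝ) (hw : ∀ a, 0 < w a) (s : ℂ)
    (habs : Summable fun x : Word N =>
      ‖((totalWeight w x : ℂ) / (wordLen x : ℂ)) * Complex.exp (-s * (totalWeight w x : ℂ))‖) :
    ∑' x : Word N,
        ((totalWeight w x : ℂ) / (wordLen x : ℂ)) * Complex.exp (-s * (totalWeight w x : ℂ))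
      = ∑' (p : {p : Finset (Sequences N) // IsPeriodicOrbit p}) (k : ℕ),
          (orbitWeight w p.1 : ℂ) *
            Complex.exp (-s * ((k : ℂ) + 1) * (orbitWeight w p.1 : ℂ)) :=
  euler_sum_general N w s habs

end SuspendedFlow
end

section
/- Let m be the number of indices j ∈ {1,...,N} with r_j = r_N, and let D_0 be a real number satisfying 1 + Σ_{j=1}^{N−m} r_j^{D_0} = m·r_N^{D_0}. Then every complex number ω with Σ_{j=1}^N r_j^ω = 1 satisfies D_0 ≤ Re ω ≤ D; moreover, the only real solution ω of Σ_{j=1}^N r_j^ω = 1 is ω = D. -/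
/-!
Taking norms in `∑ r_j^ω = 1` gives `∑ r_j^{Re ω} ≥ 1`, and `x ↦ ∑ r_j^x` is strictly
decreasing, so `Re ω ≤ D`; the same monotonicity gives uniqueness of the real solution.
For the lower bound, isolate the `m` terms with the smallest ratio `r_N`: taking norms in
`m r_N^ω = 1 - ∑_{j ≤ N-m} r_j^ω` gives `m r_N^{Re ω} ≤ 1 + ∑_{j ≤ N-m} r_j^{Re ω}`.
Multiplied by `r_N^{-x}`, the right-hand side becomes `r_N^{-x} + ∑ (r_j / r_N)^x` with all
bases `≥ 1` and the first `> 1`, a strictly increasing function of `x` that equals `m` at `D_0`.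
-/

open Finset

section ExponentialSums

variable {ι : Type*}

theorem Complex.norm_exp_neg_ofReal_mul (r : ℝ) (z : ℂ) :
    ‖Complex.exp (-(r : ℂ) * z)‖ = Real.exp (-r * z.re) := by
  rw [Complex.norm_exp]
  simp [Complex.mul_re]

theorem norm_sum_cexp_neg_mul_le (s : Finset ι) (w : ι → ℝ) (z : ℂ) :
    ‖∑ j ∈ s, Complex.exp (-(w j : ℂ) * z)‖ ≤ ∑ j ∈ s, Real.exp (-w j * z.re) :=
  (norm_sum_le _ _).trans_eq (sum_congr rfl fun _ _ => Complex.norm_exp_neg_ofReal_mul _ _)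

theorem strictAnti_sum_exp_neg_mul [Fintype ι] [Nonempty ι] {w : ι → ℝ} (hw : ∀ j, 0 < w j) :
    StrictAnti fun x : ℝ => ∑ j, Real.exp (-w j * x) := fun x y hxy =>
  sum_lt_sum_of_nonempty univ_nonempty fun j _ =>
    Real.exp_lt_exp.mpr (by nlinarith [hw j])

theorem re_le_of_sum_cexp_neg_mul_eq_one [Fintype ι] [Nonempty ι] {w : ι → ℝ}
    (hw : ∀ j, 0 < w j) {D : ℝ} (hD : ∑ j, Real.exp (-w j * D) = 1) {ω : ℂ}
    (hω : ∑ j, Complex.exp (-(w j : ℂ) * ω) = 1) : ω.re ≤ D := by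
  have h := norm_sum_cexp_neg_mul_le univ w ω
  rw [hω, norm_one, ← hD] at h
  exact (strictAnti_sum_exp_neg_mul hw).le_iff_ge.mp h

theorem strictMono_one_add_sum_exp_neg_mul_mul_exp (s : Finset ι) {w : ι → ℝ} {c : ℝ}
    (hc : 0 < c) (hwc : ∀ j ∈ s, w j ≤ c) :
    StrictMono fun x : ℝ => (1 + ∑ j ∈ s, Real.exp (-w j * x)) * Real.exp (c * x) := by
  have hexpand : ∀ x : ℝ, (1 + ∑ j ∈ s, Real.exp (-w j * x)) * Real.exp (c * x)
      = Real.exp (c * x) + ∑ j ∈ s, Real.exp ((c - w j) * x) := fun x => by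
    rw [add_mul, one_mul, sum_mul]
    congr 1
    refine sum_congr rfl fun j _ => ?_
    rw [← Real.exp_add]
    ring_nf
  intro x y hxy
  simp only [hexpand]
  refine add_lt_add_of_lt_of_le (Real.exp_lt_exp.mpr (by nlinarith)) ?_
  exact sum_le_sum fun j hj => Real.exp_le_exp.mpr (by nlinarith [hwc j hj])

theorem le_re_of_sum_cexp_neg_mul_add_eq_one (s : Finset ι) {w : ι → ℝ} {c : ℝ}
    (hc : 0 < c) (hwc : ∀ j ∈ s, w j ≤ c) {m D0 : ℝ}
    (hD0 : 1 + ∑ j ∈ s, Real.exp (-w j * D0) = m * Real.exp (-c * D0)) {ω : ℂ}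
    (hω : ∑ j ∈ s, Complex.exp (-(w j : ℂ) * ω) + m * Complex.exp (-(c : ℂ) * ω) = 1) :
    D0 ≤ ω.re := by
  have hnorm : m * Real.exp (-c * ω.re) ≤ 1 + ∑ j ∈ s, Real.exp (-w j * ω.re) :=
    calc m * Real.exp (-c * ω.re)
        ≤ ‖(m : ℂ) * Complex.exp (-(c : ℂ) * ω)‖ := by
          rw [norm_mul, Complex.norm_exp_neg_ofReal_mul, Complex.norm_real]
          exact mul_le_mul_of_nonneg_right (le_abs_self m) (Real.exp_pos _).le
      _ = ‖1 - ∑ j ∈ s, Complex.exp (-(w j : ℂ) * ω)‖ := by rw [← hω, add_sub_cancel_left]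
      _ ≤ 1 + ‖∑ j ∈ s, Complex.exp (-(w j : ℂ) * ω)‖ := by
          simpa using norm_sub_le (1 : ℂ) (∑ j ∈ s, Complex.exp (-(w j : ℂ) * ω))
      _ ≤ 1 + ∑ j ∈ s, Real.exp (-w j * ω.re) := by
          gcongr; exact norm_sum_cexp_neg_mul_le s w ω
  have hcancel : ∀ x : ℝ, Real.exp (-c * x) * Real.exp (c * x) = 1 := fun x => by
    rw [← Real.exp_add]; simp
  refine (strictMono_one_add_sum_exp_neg_mul_mul_exp s hc hwc).le_iff_le.mp ?_
  calc (1 + ∑ j ∈ s, Real.exp (-w j * D0)) * Real.exp (c * D0)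
      = m * Real.exp (-c * ω.re) * Real.exp (c * ω.re) := by
        rw [hD0, mul_assoc, mul_assoc, hcancel, hcancel]
    _ ≤ _ := mul_le_mul_of_nonneg_right hnorm (Real.exp_pos _).le

end ExponentialSums

section SortedWeights

variable {α : Type*} [LinearOrder α] {N : ℕ} {w : Fin N → α}

theorem Monotone.val_lt_sub_card_filter_eq_iff (hw : Monotone w) {b : α} (hb : ∀ j, w j ≤ b)
    (j : Fin N) : (j : ℕ) < N - #{i | w i = b} ↔ w j < b := by
  constructor
  · intro hj
    refine (hb j).lt_of_ne fun hjb => ?_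
    have hsub : Ici j ⊆ ({i | w i = b} : Finset (Fin N)) := fun i hi => by
      simpa using le_antisymm (hb i) (hjb ▸ hw (mem_Ici.mp hi))
    have := card_le_card hsub
    rw [Fin.card_Ici] at this
    omega
  · intro hjb
    have hsub : Iic j ⊆ ({i | ¬ w i = b} : Finset (Fin N)) := fun i hi => by
      simpa using ((hw (mem_Iic.mp hi)).trans_lt hjb).ne
    have := card_le_card hsub
    have htotal := card_filter_add_card_filter_not (s := univ) (fun i => w i = b)
    rw [Fin.card_Iic] at this
    rw [card_univ, Fintype.card_fin] at htotal
    omega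

theorem Monotone.sum_eq_sum_ite_add_card_smul {M : Type*} [AddCommMonoid M] (hw : Monotone w)
    {b : α} (hb : ∀ j, w j ≤ b) (g : α → M) :
    ∑ j, g (w j) = (∑ j : Fin N, if (j : ℕ) < N - #{i | w i = b} then g (w j) else 0)
      + #{i | w i = b} • g b := by
  rw [← sum_filter_add_sum_filter_not univ fun j : Fin N => (j : ℕ) < N - #{i | w i = b},
    sum_filter]
  congr 1
  have hfilter : ({j | ¬ (j : ℕ) < N - #{i | w i = b}} : Finset (Fin N))
      = ({i | w i = b} : Finset (Fin N)) := by
    ext j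
    simp only [mem_filter, mem_univ, true_and, hw.val_lt_sub_card_filter_eq_iff hb, not_lt]
    exact ⟨le_antisymm (hb j), ge_of_eq⟩
  rw [hfilter, ← sum_const]
  exact sum_congr rfl fun j hj => by rw [(mem_filter.mp hj).2]

end SortedWeights

/-- With `m` the number of indices where the weight attains its maximum `w_N`, and `D_0`
a real number with `1 + ∑_{j=1}^{N-m} r_j^{D_0} = m r_N^{D_0}`, every complex solution `ω`
of `∑_j r_j^ω = 1` satisfies `D_0 ≤ Re ω ≤ D`, and the only real solution is `ω = D`. -/
theorem complex_dimensions_in_strip (N : ℕ) (hN : 2 ≤ N) (w : Fin N → ℝ)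
    (hw : ∀ j, 0 < w j) (hmono : Monotone w)
    (D : ℝ) (hD : ∑ j, Real.exp (-(w j) * D) = 1)
    (wN : ℝ) (hwN : wN = w ⟨N - 1, by omega⟩)
    (m : ℕ) (hm : m = Nat.card {j : Fin N // w j = wN})
    (D0 : ℝ)
    (hD0 : 1 + ∑ j : Fin N, (if (j : ℕ) < N - m then Real.exp (-(w j) * D0) else 0)
        = m * Real.exp (-wN * D0)) :
    (∀ ω : ℂ, ∑ j, Complex.exp (-(w j : ℂ) * ω) = 1 → D0 ≤ ω.re ∧ ω.re ≤ D) ∧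
      ∀ x : ℝ, ∑ j, Real.exp (-(w j) * x) = 1 → x = D := by
  have : Nonempty (Fin N) := ⟨⟨0, by omega⟩⟩
  have hmax : ∀ j, w j ≤ wN := fun j =>
    hwN ▸ hmono (Fin.le_def.mpr (Nat.le_sub_one_of_lt j.isLt))
  have hcard : m = #{j | w j = wN} := by
    rw [hm, Nat.card_eq_fintype_card, Fintype.card_subtype]
  rw [← sum_filter] at hD0
  refine ⟨fun ω hω => ⟨?_, re_le_of_sum_cexp_neg_mul_eq_one hw hD hω⟩,
    fun x hx => (strictAnti_sum_exp_neg_mul hw).injective (hx.trans hD.symm)⟩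
  refine le_re_of_sum_cexp_neg_mul_add_eq_one _ (hwN ▸ hw _) (fun j _ => hmax j) hD0 ?_
  rw [hmono.sum_eq_sum_ite_add_card_smul hmax fun r : ℝ => Complex.exp (-(r : ℂ) * ω),
    ← hcard, ← sum_filter, nsmul_eq_mul] at hω
  exact_mod_cast hω
end

section
/- Suppose the additive subgroup of ℝ generated by w_1, ..., w_N is dense in ℝ (the nonlattice case). Then the complex dimensions come arbitrarily close, from the left, to the line Re s = D: for every δ > 0 there exist infinitely many complex numbers ω ≠ D with Σ_{j=1}^N e^{−w_j ω} = 1 and D − δ < Re ω < D. -/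
/-!
Every complex dimension satisfies `Re ω ≤ D` by the triangle inequality, and one with
`Re ω = D` and `Im ω = y ≠ 0` forces `cos (w_j y) = 1` for all `j`, i.e. all `w_j` lie in the
cyclic group `(2π / y) ℤ`, which is not dense. Conversely, by compactness of the torus there are
arbitrarily large `t` with every `exp (-i w_j t)` close to `1`. The function
`s ↦ ∑ exp (-w_j (s + i t)) - 1` is then a small perturbation, near `D`, of a function with a
simple zero at `D`, so by the quantitative inverse function theorem it has a zero `D + z` with
`z` small. The resulting complex dimensions `D + z + i t` have unbounded imaginary parts.
-/

open Filter Topology Metric Complex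

theorem exists_pos_pow_mem_of_mem_nhds_one {G : Type*} [Group G] [TopologicalSpace G]
    [IsTopologicalGroup G] [CompactSpace G] (g : G) {U : Set G} (hU : U ∈ 𝓝 1) :
    ∃ n : ℕ, 0 < n ∧ g ^ n ∈ U := by
  obtain ⟨V, hV, hVU⟩ := exists_nhds_split_inv hU
  obtain ⟨x, hx⟩ := exists_clusterPt_of_compactSpace (map (g ^ · : ℕ → G) atTop)
  have hW : {y | y / x ∈ V} ∈ 𝓝 x :=
    (continuous_div_right' x).continuousAt.preimage_mem_nhds (by simpa using hV)
  have hfreq : ∃ᶠ n in atTop, g ^ n / x ∈ V := MapClusterPt.frequently hx hW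
  obtain ⟨m, hm⟩ := hfreq.exists
  obtain ⟨n, hmn, hn⟩ := frequently_atTop.1 hfreq (m + 1)
  refine ⟨n - m, by omega, ?_⟩
  simpa [div_div_div_cancel_right, pow_sub _ (by omega : m ≤ n), div_eq_mul_inv]
    using hVU _ hn _ hm

theorem exists_ge_forall_norm_cexp_sub_one_lt {ι : Type*} [Finite ι] (θ : ι → ℝ) (T : ℝ)
    {ε : ℝ} (hε : 0 < ε) : ∃ t ≥ T, ∀ j, ‖cexp (↑(θ j * t) * I) - 1‖ < ε := by
  have hU : {z : ι → Circle | ∀ j, dist (z j) 1 < ε} ∈ 𝓝 1 :=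
    eventually_all.2 fun j => (continuous_apply j).continuousAt (x := (1 : ι → Circle))
      (ball_mem_nhds (1 : Circle) hε)
  set T' := max T 0
  obtain ⟨n, hn, hgn⟩ :=
    exists_pos_pow_mem_of_mem_nhds_one (fun j => Circle.exp (θ j * T')) hU
  refine ⟨n * T', ?_, fun j => ?_⟩
  · have : (1 : ℝ) ≤ n := by exact_mod_cast hn
    nlinarith [le_max_left T 0, le_max_right T 0]
  · have h : dist ((Circle.exp (θ j * T') ^ n : Circle) : ℂ) 1 < ε := hgn j
    rwa [dist_eq_norm, ← Circle.exp_natCast_mul, Circle.coe_exp, mul_left_comm] at h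

theorem exists_mem_closedBall_eq_zero_of_hasDerivAt {𝕜 : Type*} [RCLike 𝕜] {f f' : 𝕜 → 𝕜}
    {c A : 𝕜} {ρ : ℝ} (hA : A ≠ 0) (hf : ∀ s ∈ closedBall c ρ, HasDerivAt f (f' s) s)
    (hf' : ∀ s ∈ closedBall c ρ, ‖f' s - A‖ ≤ ‖A‖ / 2) (hc : ‖f c‖ ≤ ‖A‖ * ρ / 2) :
    ∃ z ∈ closedBall c ρ, f z = 0 := by
  have hρ : 0 ≤ ρ := by
    by_contra! h
    nlinarith [norm_nonneg (f c), norm_pos_iff.2 hA]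
  have happrox : ApproximatesLinearOn f (A • ContinuousLinearMap.id 𝕜 𝕜) (closedBall c ρ)
      (‖A‖₊ / 2) := by
    rw [ApproximatesLinearOn.approximatesLinearOn_iff_lipschitzOnWith]
    refine (convex_closedBall c ρ).lipschitzOnWith_of_nnnorm_hasDerivWithin_le
      (f' := fun s => f' s - A) (fun s hs => ?_) fun s hs => ?_
    convert ((hf s hs).sub ((hasDerivAt_id s).const_mul A)).hasDerivWithinAt using 1
    · ext y
      simp
    · simp
    · rw [← NNReal.coe_le_coe]
      simpa using hf' s hs
  let inv : (A • ContinuousLinearMap.id 𝕜 𝕜).NonlinearRightInverse :=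
    { toFun := fun y => A⁻¹ * y
      nnnorm := ‖A‖₊⁻¹
      bound' := fun y => by simp
      right_inv' := fun y => by simp [hA] }
  refine happrox.surjOn_closedBall_of_nonlinearRightInverse inv hρ subset_rfl ?_
  rw [mem_closedBall, dist_comm, dist_zero_right]
  convert hc using 1
  simp only [inv, NNReal.coe_inv, inv_inv, coe_nnnorm, NNReal.coe_div, NNReal.coe_ofNat]
  ring

theorem norm_mul_cexp_neg_mul_sub_one_le_half {η s : ℂ} {w ρ ε : ℝ} (hw : 0 ≤ w)
    (hwρ : 8 * w * ρ ≤ 1) (hη1 : ‖η‖ = 1) (hη : ‖η - 1‖ ≤ ε) (hε : ε ≤ 1 / 4) (hs : ‖s‖ ≤ ρ) :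
    ‖η * cexp (-w * s) - 1‖ ≤ 1 / 2 := by
  have hws : ‖-w * s‖ ≤ w * ρ := by
    rw [norm_mul, norm_neg, norm_real, Real.norm_of_nonneg hw]
    exact mul_le_mul_of_nonneg_left hs hw
  calc ‖η * cexp (-w * s) - 1‖ = ‖η * (cexp (-w * s) - 1) + (η - 1)‖ := by ring_nf
    _ ≤ ‖η‖ * ‖cexp (-w * s) - 1‖ + ‖η - 1‖ := (norm_add_le _ _).trans_eq (by rw [norm_mul])
    _ ≤ 2 * ‖-w * s‖ + ε := by
      rw [hη1, one_mul]
      gcongr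
      exact norm_exp_sub_one_le (by linarith)
    _ ≤ 1 / 2 := by linarith

theorem norm_sum_mul_sub_sum_le {ι : Type*} [Fintype ι] {p : ι → ℝ} {η : ι → ℂ} {ε : ℝ}
    (hp : ∀ j, 0 ≤ p j) (hη : ∀ j, ‖η j - 1‖ ≤ ε) :
    ‖∑ j, p j * η j - ∑ j, (p j : ℂ)‖ ≤ (∑ j, p j) * ε := by
  rw [← Finset.sum_sub_distrib, Finset.sum_mul]
  refine norm_sum_le_of_le _ fun j _ => ?_
  rw [← mul_sub_one, norm_mul, norm_real, Real.norm_of_nonneg (hp j)]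
  exact mul_le_mul_of_nonneg_left (hη j) (hp j)

theorem exists_norm_le_sum_mul_cexp_eq_one {ι : Type*} [Fintype ι] {p w : ι → ℝ} {η : ι → ℂ}
    {ρ ε : ℝ} (hp : ∀ j, 0 ≤ p j) (hp1 : ∑ j, p j = 1) (hw : ∀ j, 0 < w j)
    (hwρ : ∀ j, 8 * w j * ρ ≤ 1) (hη1 : ∀ j, ‖η j‖ = 1) (hη : ∀ j, ‖η j - 1‖ ≤ ε)
    (hε : ε ≤ 1 / 4) (hερ : ε ≤ (∑ j, p j * w j) * ρ / 2) :
    ∃ z : ℂ, ‖z‖ ≤ ρ ∧ ∑ j, p j * η j * cexp (-w j * z) = 1 := by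
  set S := ∑ j, p j * w j
  have hpw : ∀ j, 0 ≤ p j * w j := fun j => mul_nonneg (hp j) (hw j).le
  have hS : 0 < S := by
    obtain ⟨j, -, hj⟩ := Finset.exists_ne_zero_of_sum_ne_zero (hp1 ▸ one_ne_zero)
    exact Finset.sum_pos' (fun j _ => hpw j)
      ⟨j, Finset.mem_univ j, mul_pos ((hp j).lt_of_ne' hj) (hw j)⟩
  have hnormS : ‖(-S : ℂ)‖ = S := by rw [norm_neg, norm_real, Real.norm_of_nonneg hS.le]
  set f : ℂ → ℂ := fun z => ∑ j, p j * η j * cexp (-w j * z) - 1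
  set f' : ℂ → ℂ := fun z => -∑ j, (p j * w j : ℝ) * (η j * cexp (-w j * z))
  have hf : ∀ s, HasDerivAt f (f' s) s := fun s => by
    refine ((HasDerivAt.fun_sum fun j _ =>
      ((hasDerivAt_id s).const_mul (-(w j : ℂ))).cexp.const_mul _).sub_const 1).congr_deriv ?_
    simp only [f', id_eq, ← Finset.sum_neg_distrib]
    exact Finset.sum_congr rfl fun j _ => by push_cast; ring
  have hf' : ∀ s ∈ closedBall (0 : ℂ) ρ, ‖f' s - -S‖ ≤ ‖(-S : ℂ)‖ / 2 := by
    intro s hs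
    have heq : f' s - -S = -(∑ j, (p j * w j : ℝ) * (η j * cexp (-w j * s)) -
        ∑ j, ((p j * w j : ℝ) : ℂ)) := by
      simp only [f', S, ofReal_sum]
      ring
    rw [heq, norm_neg, hnormS, ← mul_one_div S]
    rw [mem_closedBall, dist_zero_right] at hs
    exact norm_sum_mul_sub_sum_le hpw fun j =>
      norm_mul_cexp_neg_mul_sub_one_le_half (hw j).le (hwρ j) (hη1 j) (hη j) hε hs
  have hf0 : ‖f 0‖ ≤ ‖(-S : ℂ)‖ * ρ / 2 := by
    have h := norm_sum_mul_sub_sum_le hp hη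
    rw [hp1, one_mul, ← ofReal_sum, hp1, ofReal_one] at h
    simpa [f, hnormS] using h.trans hερ
  obtain ⟨z, hz, hfz⟩ := exists_mem_closedBall_eq_zero_of_hasDerivAt
    (by exact_mod_cast neg_ne_zero.2 hS.ne') (fun s _ => hf s) hf' hf0
  exact ⟨z, by simpa using hz, sub_eq_zero.1 hfz⟩

section

variable {ι : Type*} [Fintype ι] {w : ι → ℝ} {D : ℝ} {ω : ℂ}

theorem re_le_of_sum_cexp_eq_one (hw : ∀ j, 0 < w j) (hD : ∑ j, Real.exp (-w j * D) = 1)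
    (hω : ∑ j, cexp (-w j * ω) = 1) : ω.re ≤ D := by
  by_contra! h
  have hne : (Finset.univ : Finset ι).Nonempty :=
    Finset.nonempty_of_sum_ne_zero (hD ▸ one_ne_zero)
  have : (1 : ℝ) < 1 :=
    calc (1 : ℝ) = ‖∑ j, cexp (-w j * ω)‖ := by rw [hω, norm_one]
      _ ≤ ∑ j, ‖cexp (-w j * ω)‖ := norm_sum_le _ _
      _ = ∑ j, Real.exp (-w j * ω.re) := by simp [norm_exp]
      _ < ∑ j, Real.exp (-w j * D) := Finset.sum_lt_sum_of_nonempty hne fun j _ =>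
          Real.exp_lt_exp.2 (by nlinarith [hw j])
      _ = 1 := hD
  exact lt_irrefl _ this

theorem cos_mul_im_eq_one_of_re_eq (hD : ∑ j, Real.exp (-w j * D) = 1)
    (hω : ∑ j, cexp (-w j * ω) = 1) (hre : ω.re = D) (j : ι) : Real.cos (w j * ω.im) = 1 := by
  have hsum : ∑ j, Real.exp (-w j * D) * Real.cos (w j * ω.im) = ∑ j, Real.exp (-w j * D) := by
    have hterm : ∀ j, (cexp (-w j * ω)).re = Real.exp (-w j * D) * Real.cos (w j * ω.im) := by
      intro j
      simp [exp_re, hre, neg_mul, Real.cos_neg]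
    rw [hD, ← Finset.sum_congr rfl fun j _ => hterm j, ← re_sum, hω, one_re]
  have hj := (Finset.sum_eq_sum_iff_of_le fun j _ =>
    mul_le_of_le_one_right (Real.exp_pos _).le (Real.cos_le_one _)).1 hsum j (Finset.mem_univ j)
  exact (mul_eq_left₀ (Real.exp_pos _).ne').1 hj

theorem re_lt_of_sum_cexp_eq_one (hw : ∀ j, 0 < w j) (hD : ∑ j, Real.exp (-w j * D) = 1)
    (hdense : Dense ((AddSubgroup.closure (Set.range w) : AddSubgroup ℝ) : Set ℝ))
    (hω : ∑ j, cexp (-w j * ω) = 1) (him : ω.im ≠ 0) : ω.re < D := by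
  refine (re_le_of_sum_cexp_eq_one hw hD hω).lt_of_ne fun hre => ?_
  have hmem : ∀ j, w j ∈ AddSubgroup.zmultiples (2 * Real.pi / ω.im) := fun j => by
    obtain ⟨n, hn⟩ := (Real.cos_eq_one_iff _).1 (cos_mul_im_eq_one_of_re_eq hD hω hre j)
    refine ⟨n, show n • _ = _ from ?_⟩
    rw [zsmul_eq_mul]
    field_simp
    linarith
  have hsub : AddSubgroup.closure (Set.range w) ≤ AddSubgroup.zmultiples (2 * Real.pi / ω.im) :=
    (AddSubgroup.closure_le _).2 (Set.range_subset_iff.2 hmem)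
  exact not_denseRange_zsmul (hdense.mono hsub)

theorem exists_sum_cexp_eq_one_re_gt_im_gt (hw : ∀ j, 0 < w j)
    (hD : ∑ j, Real.exp (-w j * D) = 1) {δ : ℝ} (hδ : 0 < δ) (M : ℝ) :
    ∃ ω : ℂ, ∑ j, cexp (-w j * ω) = 1 ∧ D - δ < ω.re ∧ M < ω.im := by
  have hsmall : ∀ᶠ ρ in 𝓝[>] (0 : ℝ), ρ < δ ∧ ∀ j, 8 * w j * ρ ≤ 1 := by
    refine nhdsWithin_le_nhds ((eventually_lt_nhds hδ).and (eventually_all.2 fun j => ?_))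
    exact ((continuous_const.mul continuous_id).tendsto' 0 0 (by simp)).eventually
      (eventually_le_nhds one_pos)
  obtain ⟨ρ, ⟨hρδ, hwρ⟩, hρ⟩ := (hsmall.and self_mem_nhdsWithin).exists
  have hS : 0 < ∑ j, Real.exp (-w j * D) * w j :=
    Finset.sum_pos (fun j _ => mul_pos (Real.exp_pos _) (hw j))
      (Finset.nonempty_of_sum_ne_zero (hD ▸ one_ne_zero))
  set ε := min (1 / 4) ((∑ j, Real.exp (-w j * D) * w j) * ρ / 2)
  have hε : 0 < ε := lt_min (by norm_num) (by positivity)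
  obtain ⟨t, ht, hηt⟩ := exists_ge_forall_norm_cexp_sub_one_lt (fun j => -w j) (M + δ) hε
  obtain ⟨z, hz, hsum⟩ := exists_norm_le_sum_mul_cexp_eq_one
    (p := fun j => Real.exp (-w j * D)) (η := fun j => cexp (↑(-w j * t) * I))
    (fun j => (Real.exp_pos _).le) hD hw hwρ (fun j => norm_exp_ofReal_mul_I _)
    (fun j => (hηt j).le) (min_le_left _ _) (min_le_right _ _)
  have hre := (abs_le.1 ((abs_re_le_norm z).trans hz)).1
  have him := (abs_le.1 ((abs_im_le_norm z).trans hz)).1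
  refine ⟨D + t * I + z, ?_, ?_, ?_⟩
  · rw [← hsum]
    refine Finset.sum_congr rfl fun j _ => ?_
    simp only [ofReal_exp, ← Complex.exp_add]
    congr 1
    push_cast
    ring
  · simp
    linarith
  · simp
    linarith

end

theorem nonlattice_dimensions_approach_line_general (N : ℕ) (w : Fin N → ℝ)
    (hw : ∀ j, 0 < w j)
    (D : ℝ) (hD : ∑ j, Real.exp (-(w j) * D) = 1)
    (hdense : Dense ((AddSubgroup.closure (Set.range w) : AddSubgroup ℝ) : Set ℝ)) :
    ∀ δ : ℝ, 0 < δ →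
      {ω : ℂ | ω ≠ (D : ℂ) ∧ ∑ j, Complex.exp (-(w j : ℂ) * ω) = 1 ∧
        D - δ < ω.re ∧ ω.re < D}.Infinite := by
  intro δ hδ hfin
  obtain ⟨M, hM⟩ := (hfin.image im).bddAbove
  obtain ⟨ω, hω, hre, him⟩ := exists_sum_cexp_eq_one_re_gt_im_gt hw hD hδ (max M 0)
  have him0 : ω.im ≠ 0 := ((le_max_right M 0).trans_lt him).ne'
  have hωM : ω.im ≤ M := hM ⟨ω, ⟨fun h => him0 (by simp [h]), hω, hre,
    re_lt_of_sum_cexp_eq_one hw hD hdense hω him0⟩, rfl⟩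
  linarith [le_max_left M 0]

/-- Nonlattice case: the complex dimensions come arbitrarily close, from the left, to
the line `Re s = D`: for every `δ > 0` there are infinitely many complex dimensions
`ω ≠ D` with `D - δ < Re ω < D`. -/
theorem nonlattice_dimensions_approach_line (N : ℕ) (hN : 2 ≤ N) (w : Fin N → ℝ)
    (hw : ∀ j, 0 < w j) (hmono : Monotone w)
    (D : ℝ) (hD : ∑ j, Real.exp (-(w j) * D) = 1)
    (hdense : Dense ((AddSubgroup.closure (Set.range w) : AddSubgroup ℝ) : Set ℝ)) :
    ∀ δ : ℝ, 0 < δ →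
      {ω : ℂ | ω ≠ (D : ℂ) ∧ ∑ j, Complex.exp (-(w j : ℂ) * ω) = 1 ∧
        D - δ < ω.re ∧ ω.re < D}.Infinite :=
  nonlattice_dimensions_approach_line_general N w hw D hD hdense
end

section
/- Every self-similar flow has infinitely many complex dimensions with positive real part: the set {ω ∈ ℂ : Σ_{j=1}^N e^{−w_j ω} = 1 and Re ω > 0} is infinite. -/
/-!
The equation `∑ j, exp (-w j s) = 1` has a real root `D > 0`, since the left side decreases
from `N ≥ 2` to `0` along the positive reals. The function `∑ j, exp (-w j s)` is almost periodic
in the imaginary direction: by compactness of the torus there are arbitrarily large integers `n`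
with every `exp (-i w j n)` close to `1`, and for such `n` the translate by `n i` is uniformly close
to the original on `Re s ≥ 0`. By the minimum modulus principle (a Rouché-type argument) each
translate still vanishes in a small disc around `D`, which gives zeros with `Re > 0` and
arbitrarily large imaginary part.
-/

open Complex Metric Filter Finset Set Topology

lemma DiffContOnCl.exists_mem_closedBall_eq_zero {g : ℂ → ℂ} {z₀ : ℂ} {r c : ℝ}
    (hg : DiffContOnCl ℂ g (ball z₀ r)) (hr : 0 < r) (hcenter : ‖g z₀‖ < c)
    (hsphere : ∀ z ∈ sphere z₀ r, c ≤ ‖g z‖) :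
    ∃ z ∈ closedBall z₀ r, g z = 0 := by
  by_contra! hne
  have hc : 0 < c := (norm_nonneg _).trans_lt hcenter
  have hinv : DiffContOnCl ℂ (fun z ↦ (g z)⁻¹) (ball z₀ r) :=
    hg.inv fun z hz ↦ hne z (by rwa [closure_ball z₀ hr.ne'] at hz)
  have hfrontier : ∀ z ∈ frontier (ball z₀ r), ‖(g z)⁻¹‖ ≤ c⁻¹ := by
    intro z hz
    rw [frontier_ball z₀ hr.ne'] at hz
    rw [norm_inv]
    exact inv_anti₀ hc (hsphere z hz)
  have hmax := Complex.norm_le_of_forall_mem_frontier_norm_le isBounded_ball hinv hfrontier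
    (subset_closure (mem_ball_self hr))
  rw [norm_inv, inv_le_inv₀ (norm_pos_iff.2 (hne z₀ (mem_closedBall_self hr.le))) hc] at hmax
  exact hmax.not_gt hcenter

lemma DiffContOnCl.exists_mem_closedBall_eq_zero_of_norm_sub_lt {f g : ℂ → ℂ} {z₀ : ℂ}
    {r c : ℝ} (hg : DiffContOnCl ℂ g (ball z₀ r)) (hr : 0 < r) (hf : f z₀ = 0)
    (hsphere : ∀ z ∈ sphere z₀ r, c ≤ ‖f z‖)
    (hgf : ∀ z ∈ closedBall z₀ r, ‖g z - f z‖ < c / 2) :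
    ∃ z ∈ closedBall z₀ r, g z = 0 := by
  refine hg.exists_mem_closedBall_eq_zero hr (c := c / 2) ?_ fun z hz ↦ ?_
  · simpa [hf] using hgf z₀ (mem_closedBall_self hr.le)
  · have := norm_sub_norm_le (f z) (g z)
    rw [norm_sub_rev] at this
    linarith [hsphere z hz, hgf z (sphere_subset_closedBall hz)]

lemma Differentiable.eventually_ne_zero {E : Type*} [NormedAddCommGroup E] [NormedSpace ℂ E]
    [CompleteSpace E] {f : ℂ → E} (hf : Differentiable ℂ f) {a : ℂ} (ha : f a ≠ 0) (z₀ : ℂ) :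
    ∀ᶠ z in 𝓝[≠] z₀, f z ≠ 0 := by
  by_contra! h
  have hanalytic := hf.differentiableOn.analyticOnNhd isOpen_univ
  exact ha <| hanalytic.eqOn_zero_of_preconnected_of_frequently_eq_zero isPreconnected_univ
    (mem_univ z₀) h (mem_univ a)

lemma exists_pos_le_norm_on_sphere {E F : Type*} [MetricSpace E] [ProperSpace E]
    [NormedAddCommGroup F] {f : E → F} (hf : Continuous f) {z₀ : E}
    (h : ∀ᶠ z in 𝓝[≠] z₀, f z ≠ 0) {R : ℝ} (hR : 0 < R) :
    ∃ r ∈ Ioo 0 R, ∃ c > 0, ∀ z ∈ sphere z₀ r, c ≤ ‖f z‖ := by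
  obtain ⟨ρ, hρ, hne⟩ := Metric.eventually_nhds_iff.1 (eventually_nhdsWithin_iff.1 h)
  set r := min (ρ / 2) (R / 2)
  have hr : 0 < r := lt_min (half_pos hρ) (half_pos hR)
  have hrρ : r < ρ := (min_le_left _ _).trans_lt (half_lt_self hρ)
  have hpos : ∀ z ∈ sphere z₀ r, 0 < ‖f z‖ := fun z hz ↦ by
    rw [mem_sphere] at hz
    refine norm_pos_iff.2 (hne (hz.trans_lt hrρ) ?_)
    rintro rfl
    exact hr.ne (by simpa using hz)
  obtain ⟨c, hc, hbound⟩ := (isCompact_sphere z₀ r).exists_forall_le'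
    hf.norm.continuousOn hpos
  exact ⟨r, ⟨hr, (min_le_right _ _).trans_lt (half_lt_self hR)⟩, c, hc, hbound⟩

lemma frequently_atTop_forall_norm_exp_mul_I_sub_one_lt {ι : Type*} [Finite ι] (v : ι → ℝ)
    {ε : ℝ} (hε : 0 < ε) :
    ∃ᶠ n : ℕ in atTop, ∀ j, ‖cexp ((v j * n : ℝ) * I) - 1‖ < ε := by
  have hU : {y : ι → Circle | ∀ j, ‖(y j : ℂ) - 1‖ < ε} ∈ 𝓝 1 := by
    refine IsOpen.mem_nhds ?_ fun j ↦ by simpa using hε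
    simp only [ofPred_forall]
    exact isOpen_iInter_of_finite fun j ↦ isOpen_lt (by fun_prop) continuous_const
  refine ((mapClusterPt_one_atTop_pow fun j ↦ Circle.exp (v j)).frequently hU).mono
    fun n hn j ↦ ?_
  simpa [mul_comm (v j), ← Circle.exp_natCast_mul] using hn j

section ExpSum

variable {ι : Type*} [Fintype ι]

/-- `expSum w s = ∑ j, r_j ^ s` with `r_j = exp (-w j)`. -/
noncomputable def expSum (w : ι → ℝ) (s : ℂ) : ℂ := ∑ j, cexp (-(w j : ℂ) * s)

lemma differentiable_expSum (w : ι → ℝ) : Differentiable ℂ (expSum w) := by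
  unfold expSum
  fun_prop

lemma expSum_zero (w : ι → ℝ) : expSum w 0 = Fintype.card ι := by
  simp [expSum]

lemma expSum_ofReal (w : ι → ℝ) (x : ℝ) :
    expSum w x = ((∑ j, Real.exp (-(w j * x)) : ℝ) : ℂ) := by
  simp [expSum]

variable {w : ι → ℝ}

lemma exists_pos_expSum_eq_one (hw : ∀ j, 0 < w j) (hcard : 1 < Fintype.card ι) :
    ∃ D : ℝ, 0 < D ∧ expSum w D = 1 := by
  set g : ℝ → ℝ := fun x ↦ ∑ j, Real.exp (-(w j * x))
  have hg : Continuous g := by fun_prop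
  have htend : Tendsto g atTop (𝓝 0) := by
    simpa using tendsto_finsetSum univ fun j _ ↦
      Real.tendsto_exp_neg_atTop_nhds_zero.comp (tendsto_id.const_mul_atTop (hw j))
  obtain ⟨X, hX, hX0⟩ :=
    ((htend.eventually (gt_mem_nhds one_pos)).and (eventually_ge_atTop 0)).exists
  obtain ⟨D, hD, hgD⟩ :=
    intermediate_value_Ioo' hX0 hg.continuousOn ⟨hX, by simpa [g] using hcard⟩
  exact ⟨D, hD.1, by rw [expSum_ofReal, ← ofReal_one, ← hgD]⟩

lemma norm_expSum_add_mul_I_sub_le (hw : ∀ j, 0 ≤ w j) {z : ℂ} (hz : 0 ≤ z.re) (t : ℝ) :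
    ‖expSum w (z + t * I) - expSum w z‖ ≤ ∑ j, ‖cexp ((-w j * t : ℝ) * I) - 1‖ := by
  have hterm : ∀ j, cexp (-(w j : ℂ) * (z + t * I)) - cexp (-(w j : ℂ) * z) =
      cexp (-(w j : ℂ) * z) * (cexp ((-w j * t : ℝ) * I) - 1) := fun j ↦ by
    rw [mul_sub, mul_one, ← Complex.exp_add]
    push_cast
    ring_nf
  rw [expSum, expSum, ← sum_sub_distrib]
  refine (norm_sum_le _ _).trans (sum_le_sum fun j _ ↦ ?_)
  rw [hterm, norm_mul, norm_exp]
  refine mul_le_of_le_one_left (norm_nonneg _) (Real.exp_le_one_iff.2 ?_)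
  simpa using mul_nonneg (hw j) hz

lemma exists_expSum_eq_one_lt_im (hw : ∀ j, 0 ≤ w j) {z₀ : ℂ} {r c : ℝ} (hr : 0 < r)
    (hrz₀ : r < z₀.re) (hc : 0 < c) (hz₀ : expSum w z₀ = 1)
    (hsphere : ∀ z ∈ sphere z₀ r, c ≤ ‖expSum w z - 1‖) (B : ℝ) :
    ∃ ω, expSum w ω = 1 ∧ 0 < ω.re ∧ B < ω.im := by
  set ε := c / (2 * (Fintype.card ι + 1))
  have hε : 0 < ε := by positivity
  have hcardε : Fintype.card ι * ε < c / 2 := by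
    rw [← mul_div_assoc, div_lt_div_iff₀ (by positivity) two_pos]
    nlinarith
  have hperiods := frequently_atTop_forall_norm_exp_mul_I_sub_one_lt (-w) hε
  obtain ⟨n, hrec, hn⟩ := (hperiods.and_eventually
    (tendsto_natCast_atTop_atTop.eventually_gt_atTop (B + r - z₀.im))).exists
  have hball : ∀ z ∈ closedBall z₀ r, z₀.re - r ≤ z.re ∧ z₀.im - r ≤ z.im := fun z hz ↦ by
    rw [mem_closedBall, dist_eq_norm] at hz
    have hre := (abs_le.1 ((abs_re_le_norm (z - z₀)).trans hz)).1
    have him := (abs_le.1 ((abs_im_le_norm (z - z₀)).trans hz)).1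
    rw [sub_re] at hre
    rw [sub_im] at him
    constructor <;> linarith
  have hclose : ∀ z ∈ closedBall z₀ r,
      ‖(expSum w (z + n * I) - 1) - (expSum w z - 1)‖ < c / 2 := fun z hz ↦ by
    rw [sub_sub_sub_cancel_right]
    calc _ ≤ ∑ j, ‖cexp ((-w j * n : ℝ) * I) - 1‖ :=
          norm_expSum_add_mul_I_sub_le hw (by linarith [(hball z hz).1]) n
      _ ≤ ∑ _j : ι, ε := sum_le_sum fun j _ ↦ (hrec j).le
      _ < c / 2 := by simpa using hcardε
  have hdiff : DiffContOnCl ℂ (fun z ↦ expSum w (z + n * I) - 1) (ball z₀ r) :=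
    (((differentiable_expSum w).comp (differentiable_id.add_const _)).sub_const 1).diffContOnCl
  obtain ⟨z, hz, hzero⟩ :=
    hdiff.exists_mem_closedBall_eq_zero_of_norm_sub_lt hr (by simp [hz₀]) hsphere hclose
  refine ⟨z + n * I, sub_eq_zero.1 hzero, ?_, ?_⟩ <;> simp <;> linarith [hball z hz]

end ExpSum

theorem infinitely_many_complex_dimensions_general (N : ℕ) (hN : 2 ≤ N) (w : Fin N → ℝ)
    (hw : ∀ j, 0 < w j) :
    {ω : ℂ | ∑ j, Complex.exp (-(w j : ℂ) * ω) = 1 ∧ 0 < ω.re}.Infinite := by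
  have hcard : 1 < Fintype.card (Fin N) := by rw [Fintype.card_fin]; omega
  obtain ⟨D, hD, hD1⟩ := exists_pos_expSum_eq_one hw hcard
  have hf : Differentiable ℂ (fun s ↦ expSum w s - 1) := (differentiable_expSum w).sub_const 1
  have hf0 : expSum w 0 - 1 ≠ 0 := by
    rw [expSum_zero, sub_ne_zero]
    exact_mod_cast hcard.ne'
  obtain ⟨r, ⟨hr, hrD⟩, c, hc, hsphere⟩ :=
    exists_pos_le_norm_on_sphere hf.continuous (hf.eventually_ne_zero hf0 D) hD
  refine Set.Infinite.of_image im (Set.infinite_of_forall_exists_gt fun B ↦ ?_)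
  obtain ⟨ω, hω1, hωre, hωim⟩ :=
    exists_expSum_eq_one_lt_im (fun j ↦ (hw j).le) hr (by simpa using hrD) hc hD1 hsphere B
  exact ⟨ω.im, mem_image_of_mem _ ⟨hω1, hωre⟩, hωim⟩

/-- Every self-similar flow has infinitely many complex dimensions with positive
real part. -/
theorem infinitely_many_complex_dimensions (N : ℕ) (hN : 2 ≤ N) (w : Fin N → ℝ)
    (hw : ∀ j, 0 < w j) (hmono : Monotone w) :
    {ω : ℂ | ∑ j, Complex.exp (-(w j : ℂ) * ω) = 1 ∧ 0 < ω.re}.Infinite :=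
  infinitely_many_complex_dimensions_general N hN w hw
end

section
/- Let (d_ν)_{ν≥0} be nonnegative integers, only finitely many nonzero, satisfying d_0 < a_1, d_ν ≤ a_{ν+1} for all ν, and d_{ν−1} = 0 whenever d_ν = a_{ν+1} (for ν ≥ 1). Set n = Σ_{ν≥0} d_ν q_ν and assume n ≥ 1; let k be the smallest index with d_k ≠ 0, and put m = Σ_{ν≥k} d_ν p_ν. Then nα − m lies strictly between (−1)^k/q'_{k+2} and (−1)^k/q'_k: if k is even then 1/q'_{k+2} < nα − m < 1/q'_k, and if k is odd then −1/q'_k < nα − m < −1/q'_{k+2}. -/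
namespace CFApprox

/-- The sequence `α_n` of complete quotients of `α`: `α_0 = α`,
`α_{n+1} = 1/(α_n - ⌊α_n⌋)`. -/
noncomputable def cfAlpha (α : ℝ) : ℕ → ℝ
  | 0 => α
  | n + 1 => 1 / (cfAlpha α n - ⌊cfAlpha α n⌋)

/-- The partial quotients `a_n = ⌊α_n⌋` of the continued fraction of `α`. -/
noncomputable def cfA (α : ℝ) (n : ℕ) : ℤ := ⌊cfAlpha α n⌋

/-- The numerators `p_n` of the convergents of `α`:
`p_0 = a_0`, `p_1 = a_1 a_0 + 1`, `p_{n+2} = a_{n+2} p_{n+1} + p_n`. -/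
noncomputable def cfP (α : ℝ) : ℕ → ℤ
  | 0 => cfA α 0
  | 1 => cfA α 1 * cfA α 0 + 1
  | n + 2 => cfA α (n + 2) * cfP α (n + 1) + cfP α n

/-- The denominators `q_n` of the convergents of `α`:
`q_0 = 1`, `q_1 = a_1`, `q_{n+2} = a_{n+2} q_{n+1} + q_n`. -/
noncomputable def cfQ (α : ℝ) : ℕ → ℤ
  | 0 => 1
  | 1 => cfA α 1
  | n + 2 => cfA α (n + 2) * cfQ α (n + 1) + cfQ α n

/-- `q'_n = α_1 α_2 ⋯ α_n`. -/
noncomputable def cfQ' (α : ℝ) (n : ℕ) : ℝ := ∏ i ∈ Finset.Icc 1 n, cfAlpha α i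

/-! With `e_ν = 1/q'_ν` one has `q_ν α - p_ν = (-1)^ν e_{ν+1}` and
`e_ν = a_{ν+1} e_{ν+1} + e_{ν+2}`, so `(-1)^k (nα - m) = T_k`, where
`T_t = ∑_{i ≥ 0} (-1)^i d_{t+i} e_{t+i+1}` (`altDigitSum`). Since
`T_t = d_t e_{t+1} - T_{t+1}`, backward induction with `0 ≤ d_t ≤ a_{t+1}` keeps `T_t` strictly
between `-e_{t+1}` and `e_t`. Peeling off two terms, `d_k ≥ 1` and `d_{k+1} ≤ a_{k+2} - 1` (the
latter from the condition on consecutive digits) push `T_k` above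
`e_{k+1} - (a_{k+2} - 1) e_{k+2} - e_{k+3} = e_{k+2}`. -/

section AlternatingSums

def altDigitSum (d e : ℕ → ℝ) (t M : ℕ) : ℝ :=
  ∑ i ∈ Finset.range M, (-1) ^ i * d (t + i) * e (t + i + 1)

lemma sum_Ico_eq_neg_one_pow_mul_altDigitSum (d e : ℕ → ℝ) (k M : ℕ) :
    ∑ ν ∈ Finset.Ico k (k + M), (-1) ^ ν * d ν * e (ν + 1)
      = (-1) ^ k * altDigitSum d e k M := by
  rw [Finset.sum_Ico_eq_sum_range, Nat.add_sub_cancel_left, altDigitSum, Finset.mul_sum]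
  refine Finset.sum_congr rfl fun i _ => ?_
  ring

variable {a e d : ℕ → ℝ}

lemma altDigitSum_zero (t : ℕ) : altDigitSum d e t 0 = 0 := Finset.sum_range_zero _

lemma altDigitSum_succ (t M : ℕ) :
    altDigitSum d e t (M + 1) = d t * e (t + 1) - altDigitSum d e (t + 1) M := by
  simp only [altDigitSum, Finset.sum_range_succ']
  rw [sub_eq_add_neg, add_comm, ← Finset.sum_neg_distrib]
  congr 1
  · simp
  · refine Finset.sum_congr rfl fun i _ => ?_
    rw [show t + (i + 1) = t + 1 + i by omega]
    ring

lemma altDigitSum_mem_Ioo (he : ∀ t, 0 < e t)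
    (hrec : ∀ t, e t = a (t + 1) * e (t + 1) + e (t + 2)) (hd : ∀ t, 0 ≤ d t)
    (hda : ∀ t, d t ≤ a (t + 1)) (M t : ℕ) :
    altDigitSum d e t M ∈ Set.Ioo (-e (t + 1)) (e t) := by
  induction M generalizing t with
  | zero => simpa [altDigitSum_zero] using ⟨he (t + 1), he t⟩
  | succ M ih =>
    obtain ⟨hlo, hhi⟩ := ih (t + 1)
    have hde₀ : 0 ≤ d t * e (t + 1) := mul_nonneg (hd t) (he _).le
    have hde : d t * e (t + 1) ≤ a (t + 1) * e (t + 1) :=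
      mul_le_mul_of_nonneg_right (hda t) (he _).le
    rw [altDigitSum_succ]
    constructor
    · linarith [he (t + 1)]
    · linarith [hrec t]

lemma lt_altDigitSum (he : ∀ t, 0 < e t)
    (hrec : ∀ t, e t = a (t + 1) * e (t + 1) + e (t + 2)) (hd : ∀ t, 0 ≤ d t)
    (hda : ∀ t, d t ≤ a (t + 1)) (t M : ℕ) (hdt : 1 ≤ d t)
    (hdt' : d (t + 1) ≤ a (t + 2) - 1) :
    e (t + 2) < altDigitSum d e t (M + 2) := by
  have htail := (altDigitSum_mem_Ioo he hrec hd hda M (t + 2)).1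
  have h1 : e (t + 1) ≤ d t * e (t + 1) := le_mul_of_one_le_left (he _).le hdt
  have h2 : d (t + 1) * e (t + 2) ≤ (a (t + 2) - 1) * e (t + 2) :=
    mul_le_mul_of_nonneg_right hdt' (he _).le
  rw [altDigitSum_succ, altDigitSum_succ]
  linarith [hrec (t + 1)]

end AlternatingSums

variable {α : ℝ}

lemma cfAlpha_succ (n : ℕ) : cfAlpha α (n + 1) = (Int.fract (cfAlpha α n))⁻¹ := by
  rw [cfAlpha, one_div, Int.fract]

lemma fract_cfAlpha (n : ℕ) : Int.fract (cfAlpha α n) = (cfAlpha α (n + 1))⁻¹ := by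
  rw [cfAlpha_succ, inv_inv]

lemma irrational_cfAlpha (hirr : Irrational α) (n : ℕ) : Irrational (cfAlpha α n) := by
  induction n with
  | zero => exact hirr
  | succ n ih =>
    rw [cfAlpha_succ, Int.fract]
    exact (ih.sub_intCast _).inv

lemma one_lt_cfAlpha_succ (hirr : Irrational α) (n : ℕ) : 1 < cfAlpha α (n + 1) := by
  rw [cfAlpha_succ]
  exact one_lt_inv₀ (Int.fract_pos.2 ((irrational_cfAlpha hirr n).ne_int _))
    |>.2 (Int.fract_lt_one _)

lemma cfQ'_zero : cfQ' α 0 = 1 := rfl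

lemma cfQ'_succ (n : ℕ) : cfQ' α (n + 1) = cfQ' α n * cfAlpha α (n + 1) :=
  Finset.prod_Icc_succ_top (Nat.le_add_left 1 n) _

lemma cfQ'_pos (hirr : Irrational α) (n : ℕ) : 0 < cfQ' α n := by
  induction n with
  | zero => exact one_pos
  | succ n ih => rw [cfQ'_succ]; exact mul_pos ih (one_pos.trans (one_lt_cfAlpha_succ hirr n))

lemma inv_cfQ'_eq (hirr : Irrational α) (n : ℕ) :
    (cfQ' α n)⁻¹ = cfA α (n + 1) * (cfQ' α (n + 1))⁻¹ + (cfQ' α (n + 2))⁻¹ := by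
  have hq := (cfQ'_pos hirr n).ne'
  have hα₁ := (one_pos.trans (one_lt_cfAlpha_succ hirr n)).ne'
  rw [cfQ'_succ (n + 1), mul_inv, ← fract_cfAlpha, Int.fract, cfQ'_succ n, cfA]
  field_simp
  ring

lemma self_sub_cfA_zero : α - cfA α 0 = (cfQ' α 1)⁻¹ := by
  rw [cfQ'_succ, cfQ'_zero, one_mul, ← fract_cfAlpha, Int.fract, cfA]
  rfl

lemma cfQ_mul_sub_cfP (hirr : Irrational α) (n : ℕ) :
    (cfQ α n : ℝ) * α - cfP α n = (-1) ^ n * (cfQ' α (n + 1))⁻¹ := by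
  induction n using Nat.twoStepInduction with
  | zero =>
    simp only [cfQ, cfP, Int.cast_one, one_mul, pow_zero]
    exact self_sub_cfA_zero
  | one =>
    have hrec := inv_cfQ'_eq hirr 0
    rw [cfQ'_zero, inv_one] at hrec
    simp only [cfQ, cfP]
    push_cast
    linear_combination (cfA α 1 : ℝ) * self_sub_cfA_zero (α := α) - hrec
  | more n ih₀ ih₁ =>
    have hrec := inv_cfQ'_eq hirr (n + 1)
    simp only [cfQ, cfP]
    push_cast
    linear_combination (cfA α (n + 2) : ℝ) * ih₁ + ih₀ + (-1) ^ n * hrec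

lemma sum_mul_cfQ_sub_sum_mul_cfP (hirr : Irrational α) (c : ℕ → ℝ) (s : Finset ℕ) :
    (∑ ν ∈ s, c ν * cfQ α ν) * α - ∑ ν ∈ s, c ν * cfP α ν
      = ∑ ν ∈ s, (-1) ^ ν * c ν * (cfQ' α (ν + 1))⁻¹ := by
  rw [Finset.sum_mul, ← Finset.sum_sub_distrib]
  refine Finset.sum_congr rfl fun ν _ => ?_
  linear_combination c ν * cfQ_mul_sub_cfP hirr ν

lemma cast_eq_sum_of_eq_finsum {x : ℤ} {d : ℕ → ℕ} {f : ℕ → ℤ} {s : Finset ℕ}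
    (hx : x = ∑ᶠ ν, (d ν : ℤ) * f ν) (hs : Function.support d ⊆ s) :
    (x : ℝ) = ∑ ν ∈ s, (d ν : ℝ) * f ν := by
  have hsupp : Function.support (fun ν => (d ν : ℤ) * f ν) ⊆ s :=
    (Function.support_mul_subset_left _ _).trans (by simpa using hs)
  rw [hx, finsum_eq_sum_of_support_subset _ hsupp]
  push_cast
  rfl

theorem alpha_adic_approximation_general (α : ℝ) (hirr : Irrational α)
    (d : ℕ → ℕ) (hfin : (Function.support d).Finite)
    (hle : ∀ ν : ℕ, (d ν : ℤ) ≤ cfA α (ν + 1))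
    (hconsec : ∀ ν : ℕ, 1 ≤ ν → (d ν : ℤ) = cfA α (ν + 1) → d (ν - 1) = 0)
    (n : ℕ) (hn : (n : ℤ) = ∑ᶠ ν : ℕ, (d ν : ℤ) * cfQ α ν)
    (k : ℕ) (hk : d k ≠ 0) (hkmin : ∀ ν, ν < k → d ν = 0)
    (m : ℤ) (hm : m = ∑ᶠ ν : ℕ, (d ν : ℤ) * cfP α ν) :
    (Even k →
      1 / cfQ' α (k + 2) < (n : ℝ) * α - (m : ℝ) ∧ (n : ℝ) * α - (m : ℝ) < 1 / cfQ' α k) ∧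
    (Odd k →
      -(1 / cfQ' α k) < (n : ℝ) * α - (m : ℝ) ∧
        (n : ℝ) * α - (m : ℝ) < -(1 / cfQ' α (k + 2))) := by
  obtain ⟨N, hN⟩ := hfin.bddAbove
  have hsupp : Function.support d ⊆ Finset.Ico k (k + (N + 2)) := fun ν hν =>
    Finset.mem_Ico.2 ⟨not_lt.1 fun h => hν (hkmin ν h), (hN hν).trans_lt (by omega)⟩
  set e : ℕ → ℝ := fun t => (cfQ' α t)⁻¹
  have hS : (n : ℝ) * α - m = (-1) ^ k * altDigitSum (fun ν => d ν) e k (N + 2) := by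
    have hnR := cast_eq_sum_of_eq_finsum hn hsupp
    rw [Int.cast_natCast] at hnR
    rw [hnR, cast_eq_sum_of_eq_finsum hm hsupp, sum_mul_cfQ_sub_sum_mul_cfP hirr]
    exact sum_Ico_eq_neg_one_pow_mul_altDigitSum (fun ν => d ν) e k (N + 2)
  have he : ∀ t, 0 < e t := fun t => inv_pos.2 (cfQ'_pos hirr t)
  have hd : ∀ t, 0 ≤ (d t : ℝ) := fun t => Nat.cast_nonneg _
  have hda : ∀ t, (d t : ℝ) ≤ cfA α (t + 1) := fun t => by exact_mod_cast hle t
  have hnext : (d (k + 1) : ℤ) < cfA α (k + 2) :=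
    (hle (k + 1)).lt_of_ne fun h => hk (hconsec (k + 1) (by omega) h)
  have hrec := inv_cfQ'_eq hirr
  have hupper := (altDigitSum_mem_Ioo (a := fun t => (cfA α t : ℝ)) he hrec hd hda (N + 2) k).2
  have hlower := lt_altDigitSum (a := fun t => (cfA α t : ℝ)) he hrec hd hda k N
    (Nat.one_le_cast.2 (Nat.one_le_iff_ne_zero.2 hk))
    (by exact_mod_cast Int.le_sub_one_of_lt hnext)
  simp only [hS, one_div]
  refine ⟨fun hev => ?_, fun hodd => ?_⟩
  · rw [hev.neg_one_pow]
    constructor <;> linarith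
  · rw [hodd.neg_one_pow]
    constructor <;> linarith

/-- If `n = ∑_ν d_ν q_ν` is the `α`-adic expansion of `n ≥ 1` and `k` is the smallest
index with `d_k ≠ 0`, then with `m = ∑_{ν ≥ k} d_ν p_ν`, the number `nα - m` lies
strictly between `(-1)^k/q'_{k+2}` and `(-1)^k/q'_k`. -/
theorem alpha_adic_approximation (α : ℝ) (hα : 1 < α) (hirr : Irrational α)
    (d : ℕ → ℕ) (hfin : (Function.support d).Finite)
    (h0 : (d 0 : ℤ) < cfA α 1)
    (hle : ∀ ν : ℕ, (d ν : ℤ) ≤ cfA α (ν + 1))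
    (hconsec : ∀ ν : ℕ, 1 ≤ ν → (d ν : ℤ) = cfA α (ν + 1) → d (ν - 1) = 0)
    (n : ℕ) (hn1 : 1 ≤ n) (hn : (n : ℤ) = ∑ᶠ ν : ℕ, (d ν : ℤ) * cfQ α ν)
    (k : ℕ) (hk : d k ≠ 0) (hkmin : ∀ ν, ν < k → d ν = 0)
    (m : ℤ) (hm : m = ∑ᶠ ν : ℕ, (d ν : ℤ) * cfP α ν) :
    (Even k →
      1 / cfQ' α (k + 2) < (n : ℝ) * α - (m : ℝ) ∧ (n : ℝ) * α - (m : ℝ) < 1 / cfQ' α k) ∧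
    (Odd k →
      -(1 / cfQ' α k) < (n : ℝ) * α - (m : ℝ) ∧
        (n : ℝ) * α - (m : ℝ) < -(1 / cfQ' α (k + 2))) :=
  alpha_adic_approximation_general α hirr d hfin hle hconsec n hn k hk hkmin m hm

end CFApprox
end

section
/- There exists a function Δ, analytic on the open disc of radius π centered at 0 in ℂ (indeed on the disc of radius |−α·log α + (α−1)·log(α−1) + πi|, which is at least π), with Δ(0) = 0, such that e^{−w_1 D}·e^{−w_1 Δ(x)} + e^{−w_2 D}·e^{−x}·e^{−w_2 Δ(x)} = 1 for all x in this disc. Moreover, Δ takes real values at real arguments, and its Taylor expansion at 0 is Δ(x) = −(e^{−w_2 D}/f'(D))·x + (w_1² e^{−w_1 D} e^{−w_2 D}/(2 f'(D)³))·x² + O(x³) as x → 0; in particular the coefficient of x is negative and the coefficient of x² is positive. -/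
open Filter Asymptotics Complex Topology

noncomputable section DeltaAux

def Om : Set ℂ := {z : ℂ | z.im ≠ 0 ∨ (0 < z.re ∧ z.re < 1)}
noncomputable def Yf (α : ℝ) (z : ℂ) : ℂ := (α : ℂ) * Complex.log z - Complex.log (1 - z)
noncomputable def yd (α : ℝ) (z : ℂ) : ℂ := (α : ℂ) * z⁻¹ + (1 - z)⁻¹
noncomputable def cC (α : ℝ) : ℝ := α * Real.log α - (α - 1) * Real.log (α - 1)
noncomputable def rhoC (α : ℝ) : ℝ := Real.sqrt ((cC α)^2 + Real.pi^2)

lemma omOpen : IsOpen Om := by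
  have : Om = (Complex.im ⁻¹' {0}ᶜ) ∪ ((Complex.re ⁻¹' Set.Ioi 0) ∩ (Complex.re ⁻¹' Set.Iio 1)) := by
    ext z; simp [Om, Set.mem_preimage]
  rw [this]
  exact ((isOpen_compl_singleton).preimage Complex.continuous_im).union
    (((isOpen_Ioi).preimage Complex.continuous_re).inter ((isOpen_Iio).preimage Complex.continuous_re))

lemma om_slit {z : ℂ} (hz : z ∈ Om) : z ∈ Complex.slitPlane := by
  rcases hz with h | h
  · exact Or.inr h
  · exact Or.inl h.1

lemma om_one_sub {z : ℂ} (hz : z ∈ Om) : (1 - z) ∈ Om := by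
  rcases hz with h | h
  · left; simpa using h
  · right; constructor <;> simp [Complex.sub_re] <;> linarith [h.1, h.2]

lemma om_ne_zero {z : ℂ} (hz : z ∈ Om) : z ≠ 0 := by
  rintro rfl; rcases hz with h | h <;> simp at h

lemma om_ne_one {z : ℂ} (hz : z ∈ Om) : z ≠ 1 := by
  rintro rfl; rcases hz with h | h <;> simp at h

lemma om_one_sub_ne {z : ℂ} (hz : z ∈ Om) : (1 : ℂ) - z ≠ 0 := om_ne_zero (om_one_sub hz)

lemma om_conj {z : ℂ} (hz : z ∈ Om) : (starRingEnd ℂ) z ∈ Om := by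
  rcases hz with h | h
  · left; simpa using h
  · right; simpa using h

lemma om_arg_ne_pi {z : ℂ} (hz : z ∈ Om) : z.arg ≠ Real.pi := by
  intro hpi
  obtain ⟨h1, h2⟩ := Complex.arg_eq_pi_iff.mp hpi
  rcases hz with h | h
  · exact h h2
  · linarith [h.1]

lemma yStrict {α : ℝ} {z : ℂ} (hz : z ∈ Om) : HasStrictDerivAt (Yf α) (yd α z) z := by
  have h2 : HasStrictDerivAt (fun z : ℂ => Complex.log (1 - z)) ((1-z)⁻¹ * (-1)) z :=
    (Complex.hasStrictDerivAt_log (om_slit (om_one_sub hz))).comp z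
      ((hasStrictDerivAt_id z).const_sub 1)
  have h3 := ((Complex.hasStrictDerivAt_log (om_slit hz)).const_mul (α:ℂ)).sub h2
  have : (α:ℂ) * z⁻¹ - (1-z)⁻¹ * (-1) = yd α z := by unfold yd; ring
  rw [← this]
  exact h3

lemma yCont {α : ℝ} {z : ℂ} (hz : z ∈ Om) : ContinuousAt (Yf α) z :=
  ((yStrict (α := α) hz).hasDerivAt).continuousAt

lemma absArg {z : ℂ} (hz : z ≠ 0) : |z.arg| = Real.arccos (z.re / ‖z‖) := by
  rw [← Complex.cos_arg hz, ← Real.cos_abs, Real.arccos_cos (abs_nonneg _) (Complex.abs_arg_le_pi z)]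

lemma yIm (α : ℝ) (z : ℂ) : (Yf α z).im = α * z.arg - (1 - z).arg := by
  simp [Yf, Complex.sub_im, Complex.mul_im, Complex.log_im]

lemma yRe (α : ℝ) (z : ℂ) : (Yf α z).re
    = α * Real.log (‖z‖) - Real.log (‖(1 - z)‖) := by
  simp [Yf, Complex.sub_re, Complex.mul_re, Complex.log_re, Complex.log_im]

lemma ydne {α : ℝ} (hα1 : 1 < α) {z : ℂ} (hz : z ∈ Om) : yd α z ≠ 0 := by
  intro h
  have hz0 : z ≠ 0 := om_ne_zero hz
  have hz1 : (1:ℂ) - z ≠ 0 := om_one_sub_ne hz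
  have key : (α:ℂ) * (1 - z) + z = 0 := by
    unfold yd at h
    field_simp at h
    linear_combination h
  have hne : (α:ℂ) - 1 ≠ 0 := by
    intro h'
    have : (α:ℝ) = 1 := by exact_mod_cast (by linear_combination h' : (α:ℂ) = 1)
    linarith
  have hz2 : z = (α:ℂ) / ((α:ℂ) - 1) := by
    field_simp
    linear_combination -key
  have hcast : ((α:ℂ) / ((α:ℂ) - 1)) = ((α / (α-1) : ℝ) : ℂ) := by push_cast; ring
  have him : z.im = 0 := by rw [hz2, hcast, Complex.ofReal_im]
  have hre : z.re = α / (α - 1) := by rw [hz2, hcast, Complex.ofReal_re]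
  have h1' : 1 < α / (α - 1) := by
    rw [lt_div_iff₀ (by linarith)]
    linarith
  rcases hz with h' | h'
  · exact h' him
  · rw [hre] at h'; linarith [h'.2]


lemma c_nonneg {α : ℝ} (hα1 : 1 < α) : 0 ≤ cC α := by
  unfold cC
  rcases le_total α 2 with h | h
  · have h1 : Real.log (α - 1) ≤ 0 := Real.log_nonpos (by linarith) (by linarith)
    have h2 : 0 ≤ Real.log α := Real.log_nonneg (by linarith)
    nlinarith
  · have h1 : 0 ≤ Real.log (α - 1) := Real.log_nonneg (by linarith)
    have h2 : Real.log (α - 1) ≤ Real.log α := by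
      apply Real.log_le_log (by linarith) (by linarith)
    nlinarith

lemma c_le_alpha {α : ℝ} (hα1 : 1 < α) : cC α ≤ α := by
  unfold cC
  have h0 : (0:ℝ) < α - 1 := by linarith
  have h1 : Real.log α - Real.log (α - 1) = Real.log (α / (α - 1)) := by
    rw [Real.log_div (by linarith) (by linarith)]
  have h2 : Real.log (α / (α - 1)) ≤ α / (α - 1) - 1 :=
    Real.log_le_sub_one_of_pos (by positivity)
  have h3 : α / (α - 1) - 1 = 1 / (α - 1) := by field_simp; ring
  have h4 : Real.log α ≤ α - 1 := Real.log_le_sub_one_of_pos (by linarith)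
  -- c = (α-1)(log α - log(α-1)) + log α ≤ (α-1)·(1/(α-1)) + (α-1) = α
  have h5 : α * Real.log α - (α - 1) * Real.log (α - 1)
      = (α - 1) * (Real.log α - Real.log (α - 1)) + Real.log α := by ring
  rw [h5, h1]
  have h6 : (α - 1) * Real.log (α / (α - 1)) ≤ 1 := by
    calc (α - 1) * Real.log (α / (α - 1)) ≤ (α - 1) * (1 / (α - 1)) := by
          apply mul_le_mul_of_nonneg_left _ (by linarith)
          rw [← h3]; exact h2
      _ = 1 := by field_simp
  linarith

lemma c_sq_le {α : ℝ} (hα1 : 1 < α) : (cC α)^2 ≤ (α^2 - 1) * Real.pi^2 := by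
  have hpi : (3:ℝ) ≤ Real.pi := by linarith [Real.pi_gt_three]
  rcases le_total 2 α with h | h
  · -- α ≥ 2 : c ≤ α and α² ≤ (α²-1)π²
    have h1 : cC α ≤ α := c_le_alpha hα1
    have h2 : (cC α)^2 ≤ α^2 := by nlinarith [c_nonneg hα1]
    have hpi2 : (9:ℝ) ≤ Real.pi^2 := by nlinarith
    have h3 : (3:ℝ) ≤ α^2 - 1 := by nlinarith
    nlinarith [mul_le_mul h3 hpi2 (by norm_num : (0:ℝ) ≤ 9) (by nlinarith : (0:ℝ) ≤ α^2-1)]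
  · -- 1 < α ≤ 2 : c ≤ 4√ε with ε = α-1
    set ε := α - 1 with hε
    have hε0 : 0 < ε := by linarith
    have hε1 : ε ≤ 1 := by linarith
    have hs0 : 0 < Real.sqrt ε := Real.sqrt_pos.mpr hε0
    have hss : Real.sqrt ε * Real.sqrt ε = ε := Real.mul_self_sqrt hε0.le
    have hsle : ε ≤ Real.sqrt ε := by
      nlinarith [Real.sqrt_le_sqrt hε1, Real.sqrt_one, Real.sq_sqrt hε0.le, hs0]
    -- α log α ≤ 2√ε
    have h1 : α * Real.log α ≤ 2 * Real.sqrt ε := by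
      have : Real.log α ≤ α - 1 := Real.log_le_sub_one_of_pos (by linarith)
      have h2 : α * Real.log α ≤ α * ε := by
        apply mul_le_mul_of_nonneg_left _ (by linarith)
        simpa [hε] using this
      have : α * ε ≤ 2 * ε := by nlinarith
      nlinarith
    -- -ε log ε ≤ 2√ε : log(1/ε) = 2 log(1/√ε) ≤ 2(1/√ε - 1)
    have h2 : -(ε * Real.log ε) ≤ 2 * Real.sqrt ε := by
      have hl : Real.log ε = 2 * Real.log (Real.sqrt ε) := by
        rw [show Real.log ε = Real.log (Real.sqrt ε ^ 2) from by rw [Real.sq_sqrt hε0.le],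
          Real.log_pow]
        push_cast; ring
      have hl2 : Real.log (Real.sqrt ε)⁻¹ ≤ (Real.sqrt ε)⁻¹ - 1 :=
        Real.log_le_sub_one_of_pos (by positivity)
      rw [Real.log_inv] at hl2
      have : -Real.log ε ≤ 2 * ((Real.sqrt ε)⁻¹ - 1) := by rw [hl]; linarith
      have h3 : ε * (-Real.log ε) ≤ ε * (2 * (Real.sqrt ε)⁻¹) := by
        apply mul_le_mul_of_nonneg_left _ hε0.le
        have : (0:ℝ) < (Real.sqrt ε)⁻¹ := by positivity
        linarith
      have h4 : ε * (2 * (Real.sqrt ε)⁻¹) = 2 * Real.sqrt ε := by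
        field_simp
        nlinarith [hss]
      nlinarith
    have hc : cC α ≤ 4 * Real.sqrt ε := by
      unfold cC
      have : α - 1 = ε := rfl
      rw [this]
      linarith
    have hsq : (cC α)^2 ≤ 16 * ε := by nlinarith [c_nonneg hα1, hs0, hss]
    have hpi2 : (9:ℝ) ≤ Real.pi^2 := by nlinarith
    have h7 : 2*ε ≤ α^2 - 1 := by nlinarith
    have h8 : (2*ε) * 9 ≤ (α^2 - 1) * Real.pi^2 :=
      mul_le_mul h7 hpi2 (by norm_num) (by nlinarith)
    nlinarith



lemma pi_le_rho {α : ℝ} : Real.pi ≤ rhoC α := by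
  unfold rhoC
  calc Real.pi = Real.sqrt (Real.pi^2) := by
        rw [Real.sqrt_sq Real.pi_pos.le]
    _ ≤ _ := Real.sqrt_le_sqrt (by nlinarith [sq_nonneg (cC α)])

lemma rho_le_alphapi {α : ℝ} (hα1 : 1 < α) : rhoC α ≤ α * Real.pi := by
  unfold rhoC
  have h := c_sq_le hα1
  calc Real.sqrt ((cC α)^2 + Real.pi^2) ≤ Real.sqrt ((α * Real.pi)^2) := by
        apply Real.sqrt_le_sqrt; nlinarith
    _ = α * Real.pi := Real.sqrt_sq (by positivity)

lemma bern {α : ℝ} (hα1 : 1 < α) {t : ℝ} (ht : 1 < t) :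
    cC α ≤ α * Real.log t - Real.log (t - 1) := by
  have hα0 : (0:ℝ) < α - 1 := by linarith
  set u := t * (α - 1) / α with hu
  have hu0 : 0 < u := div_pos (mul_pos (by linarith) hα0) (by linarith)
  have hbern : 1 + α * (u - 1) ≤ u ^ α := by
    have := one_add_mul_self_le_rpow_one_add (s := u - 1) (by linarith) hα1.le
    simpa using this
  have hid : 1 + α * (u - 1) = (t - 1) * (α - 1) := by
    rw [hu]
    field_simp
    ring
  have hpos : (0:ℝ) < (t - 1) * (α - 1) := mul_pos (by linarith) hα0
  have hlog : Real.log ((t - 1) * (α - 1)) ≤ Real.log (u ^ α) := by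
    apply Real.log_le_log hpos
    rw [← hid]; exact hbern
  rw [Real.log_rpow hu0] at hlog
  rw [Real.log_mul (by linarith) (by linarith)] at hlog
  have hlu : Real.log u = Real.log t + Real.log (α - 1) - Real.log α := by
    rw [hu, Real.log_div (by positivity) (by linarith), Real.log_mul (by linarith) (by linarith)]
  rw [hlu] at hlog
  unfold cC
  nlinarith

lemma sq_abs_c (w : ℂ) : (‖w‖)^2 = w.re^2 + w.im^2 := by
  rw [Complex.sq_norm, Complex.normSq_apply]; ring

lemma abs_real_im0 {w : ℂ} (h : w.im = 0) : ‖w‖ = |w.re| := by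
  rw [Complex.norm_def, Complex.normSq_apply, h,
    show w.re * w.re + 0 * 0 = w.re ^ 2 by ring]
  exact Real.sqrt_sq_eq_abs w.re

lemma compactS {α : ℝ} (hα1 : 1 < α) {r : ℝ} (hr0 : 0 ≤ r) (hr : r < rhoC α) :
    IsCompact {z : ℂ | z ∈ Om ∧ ‖(Yf α z)‖ ≤ r} := by
  set S := {z : ℂ | z ∈ Om ∧ ‖(Yf α z)‖ ≤ r} with hS
  set R := max 2 (Real.exp ((r + Real.log 2)/(α-1))) with hR
  have hαm1 : (0:ℝ) < α - 1 := by linarith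
  have hbdd : ∀ z ∈ S, ‖z‖ ≤ R := by
    intro z hz
    by_contra hcon
    push_neg at hcon
    have h2R : (2:ℝ) ≤ R := le_max_left _ _
    have hz2 : (1:ℝ) ≤ ‖z‖ := by linarith
    have hlog : (r + Real.log 2)/(α-1) < Real.log (‖z‖) :=
      (Real.lt_log_iff_exp_lt (by linarith)).mpr (lt_of_le_of_lt (le_max_right _ _) hcon)
    have hlog' : r + Real.log 2 < Real.log (‖z‖) * (α - 1) :=
      (div_lt_iff₀ hαm1).mp hlog
    have habs1z : ‖(1 - z)‖ ≤ 2 * ‖z‖ := by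
      have h1 : ‖(1 - z)‖ ≤ 1 + ‖z‖ := by
        simpa using norm_sub_le (1:ℂ) z
      linarith
    have h1zpos : 0 < ‖(1 - z)‖ := norm_pos_iff.mpr (om_one_sub_ne hz.1)
    have hlog2 : Real.log (‖(1-z)‖) ≤ Real.log 2 + Real.log (‖z‖) := by
      rw [← Real.log_mul (by norm_num) (by linarith)]
      exact Real.log_le_log h1zpos habs1z
    have hrele : (Yf α z).re ≤ r :=
      le_trans (le_trans (le_abs_self _) (Complex.abs_re_le_norm _)) hz.2
    rw [yRe] at hrele
    nlinarith [hlog', hlog2]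
  have hclosed : IsClosed S := by
    apply IsSeqClosed.isClosed
    intro x zs hx hlim
    have hOm : ∀ n, x n ∈ Om := fun n => (hx n).1
    have hYb : ∀ n, ‖(Yf α (x n))‖ ≤ r := fun n => (hx n).2
    have hxne0 : ∀ n, x n ≠ 0 := fun n => om_ne_zero (hOm n)
    have hx1ne0 : ∀ n, (1:ℂ) - x n ≠ 0 := fun n => om_one_sub_ne (hOm n)
    have habs : Tendsto (fun n => ‖(x n)‖) atTop (𝓝 (‖zs‖)) :=
      (continuous_norm.tendsto zs).comp hlim
    have h1x : Tendsto (fun n => (1:ℂ) - x n) atTop (𝓝 (1 - zs)) :=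
      ((continuous_const.sub continuous_id).tendsto zs).comp hlim
    have habs1 : Tendsto (fun n => ‖(1 - x n)‖) atTop (𝓝 (‖(1 - zs)‖)) :=
      (continuous_norm.tendsto _).comp h1x
    have hReb : ∀ n, |(Yf α (x n)).re| ≤ r :=
      fun n => le_trans (Complex.abs_re_le_norm _) (hYb n)
    have hImb : ∀ n, |(Yf α (x n)).im| ≤ r :=
      fun n => le_trans (Complex.abs_im_le_norm _) (hYb n)
    have hzs : zs ∈ Om := by
      by_contra hne
      have hne' : ¬(zs.im ≠ 0 ∨ (0 < zs.re ∧ zs.re < 1)) := hne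
      push_neg at hne'
      obtain ⟨him0, hre0⟩ := hne'
      have hππ : Real.pi ≤ rhoC α := pi_le_rho
      have hαπ : rhoC α ≤ α * Real.pi := rho_le_alphapi hα1
      rcases lt_or_ge zs.re 1 with htlt | htge
      · -- zs.re ≤ 0 here (since 0 < re would give 1 ≤ re)
        have ht0 : zs.re ≤ 0 := by
          by_contra h'
          push_neg at h'
          linarith [hre0 h']
        rcases eq_or_lt_of_le ht0 with hteq | htneg
        · -- zs = 0 : Re Yf → -∞
          have hz0 : zs = 0 := by apply Complex.ext <;> simp [hteq, him0]
          have habs0 : Tendsto (fun n => ‖(x n)‖) atTop (𝓝[>] 0) := by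
            apply tendsto_nhdsWithin_of_tendsto_nhds_of_eventually_within
            · rw [hz0] at habs; simpa using habs
            · exact Eventually.of_forall fun n => norm_pos_iff.mpr (hxne0 n)
          have hlogbot : Tendsto (fun n => Real.log (‖(x n)‖)) atTop atBot :=
            Real.tendsto_log_nhdsGT_zero.comp habs0
          have habs1' : Tendsto (fun n => ‖(1 - x n)‖) atTop (𝓝 1) := by
            rw [hz0] at habs1; simpa using habs1
          have hlog1 : Tendsto (fun n => Real.log (‖(1 - x n)‖)) atTop (𝓝 0) := by
            have h := ((Real.continuousAt_log (by norm_num : (1:ℝ) ≠ 0)).tendsto).comp habs1'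
            simpa [Function.comp_def] using h
          have hev1 : ∀ᶠ n in atTop, Real.log (‖(x n)‖) < (-r - 1)/α :=
            hlogbot.eventually (eventually_lt_atBot _)
          have hev2 : ∀ᶠ n in atTop, |Real.log (‖(1 - x n)‖)| < 1 := by
            have h := Metric.tendsto_nhds.mp hlog1 1 one_pos
            simpa [Real.dist_eq] using h
          obtain ⟨n, h1, h2⟩ := (hev1.and hev2).exists
          have h3 := (abs_le.mp (hReb n)).1
          rw [yRe] at h3
          have hα0 : (0:ℝ) < α := by linarith
          have h4 : α * Real.log (‖(x n)‖) < -r - 1 := by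
            have h := (lt_div_iff₀ hα0).mp h1
            nlinarith [h]
          have h5 := (abs_lt.mp h2).1
          linarith
        · -- zs.re < 0 : |Im Yf| → α π
          have hzsne : zs ≠ 0 := by
            intro h; rw [h] at htneg; simp only [Complex.zero_re] at htneg; linarith
          have habsne : ‖zs‖ ≠ 0 := norm_ne_zero_iff.mpr hzsne
          have h1slit : (1 - zs) ∈ Complex.slitPlane := by
            left; simp only [Complex.sub_re, Complex.one_re]; linarith
          have harg1 : Tendsto (fun n => (1 - x n).arg) atTop (𝓝 0) := by
            have h := (Complex.continuousAt_arg h1slit).tendsto.comp h1x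
            have h0 : (1 - zs).arg = 0 := by
              rw [Complex.arg_eq_zero_iff]
              constructor
              · simp only [Complex.sub_re, Complex.one_re]; linarith
              · simp [him0]
            rwa [h0] at h
          have hargabs : Tendsto (fun n => |(x n).arg|) atTop (𝓝 Real.pi) := by
            have hdiv : Tendsto (fun n => (x n).re / ‖(x n)‖) atTop
                (𝓝 (zs.re / ‖zs‖)) :=
              ((Complex.continuous_re.tendsto zs).comp hlim).div habs habsne
            have harccos := (Real.continuous_arccos.tendsto _).comp hdiv
            have hval : zs.re / ‖zs‖ = -1 := by
              rw [abs_real_im0 him0, abs_of_neg htneg, div_neg,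
                div_self (ne_of_lt htneg)]
            rw [hval, Real.arccos_neg_one] at harccos
            apply harccos.congr
            intro n
            exact (absArg (hxne0 n)).symm
          have hlow : ∀ n, α * |(x n).arg| - |(1 - x n).arg| ≤ r := by
            intro n
            have h1 : |α * (x n).arg| - |(1 - x n).arg| ≤ |α * (x n).arg - (1 - x n).arg| :=
              abs_sub_abs_le_abs_sub _ _
            have h2 : |α * (x n).arg| = α * |(x n).arg| := by
              rw [abs_mul, abs_of_pos (by linarith : (0:ℝ) < α)]
            have h3 := hImb n
            rw [yIm] at h3
            linarith [h1, h2 ▸ h1, h3]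
          have htend : Tendsto (fun n => α * |(x n).arg| - |(1 - x n).arg|) atTop
              (𝓝 (α * Real.pi - |0|)) := (hargabs.const_mul α).sub harg1.abs
          have hle := le_of_tendsto htend (Eventually.of_forall hlow)
          simp only [abs_zero, sub_zero] at hle
          linarith
      · -- 1 ≤ zs.re
        rcases eq_or_lt_of_le htge with hteq | htgt
        · -- zs = 1 : Re Yf → +∞
          have hz1 : zs = 1 := by apply Complex.ext <;> simp [← hteq, him0]
          have habs1z0 : Tendsto (fun n => ‖(1 - x n)‖) atTop (𝓝[>] 0) := by
            apply tendsto_nhdsWithin_of_tendsto_nhds_of_eventually_within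
            · rw [hz1] at habs1; simpa using habs1
            · exact Eventually.of_forall fun n => norm_pos_iff.mpr (hx1ne0 n)
          have hlogbot : Tendsto (fun n => Real.log (‖(1 - x n)‖)) atTop atBot :=
            Real.tendsto_log_nhdsGT_zero.comp habs1z0
          have habsx1 : Tendsto (fun n => ‖(x n)‖) atTop (𝓝 1) := by
            rw [hz1] at habs; simpa using habs
          have hlogx : Tendsto (fun n => Real.log (‖(x n)‖)) atTop (𝓝 0) := by
            have h := ((Real.continuousAt_log (by norm_num : (1:ℝ) ≠ 0)).tendsto).comp habsx1
            simpa [Function.comp_def] using h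
          have hev1 : ∀ᶠ n in atTop, Real.log (‖(1 - x n)‖) < -r - α :=
            hlogbot.eventually (eventually_lt_atBot _)
          have hev2 : ∀ᶠ n in atTop, |Real.log (‖(x n)‖)| < 1 := by
            have h := Metric.tendsto_nhds.mp hlogx 1 one_pos
            simpa [Real.dist_eq] using h
          obtain ⟨n, h1, h2⟩ := (hev1.and hev2).exists
          have h3 := (abs_le.mp (hReb n)).2
          rw [yRe] at h3
          have h5 := (abs_lt.mp h2).1
          have hα0 : (0:ℝ) < α := by linarith
          have h6 : α * Real.log (‖(x n)‖) > -α := by nlinarith [h5]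
          linarith
        · -- zs.re > 1 : |Yf|² → r*² + π² ≥ ρ²
          have hzsne : zs ≠ 0 := by
            intro h; rw [h] at htgt; simp only [Complex.zero_re] at htgt; linarith
          have h1zs_ne : (1:ℂ) - zs ≠ 0 := by
            intro h
            have : zs = 1 := by linear_combination -h
            rw [this] at htgt; simp only [Complex.one_re] at htgt; linarith
          have habsne1 : ‖(1 - zs)‖ ≠ 0 := norm_ne_zero_iff.mpr h1zs_ne
          have hslit : zs ∈ Complex.slitPlane := by left; linarith
          have hargz : Tendsto (fun n => (x n).arg) atTop (𝓝 0) := by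
            have h := (Complex.continuousAt_arg hslit).tendsto.comp hlim
            have h0 : zs.arg = 0 := Complex.arg_eq_zero_iff.mpr ⟨by linarith, him0⟩
            rwa [h0] at h
          have hargabs1 : Tendsto (fun n => |(1 - x n).arg|) atTop (𝓝 Real.pi) := by
            have hdiv : Tendsto (fun n => (1 - x n).re / ‖(1 - x n)‖) atTop
                (𝓝 ((1 - zs).re / ‖(1 - zs)‖)) :=
              ((Complex.continuous_re.tendsto _).comp h1x).div habs1 habsne1
            have harccos := (Real.continuous_arccos.tendsto _).comp hdiv
            have him1 : (1 - zs).im = 0 := by simp [him0]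
            have hval : (1 - zs).re / ‖(1 - zs)‖ = -1 := by
              have hre1 : (1 - zs).re = 1 - zs.re := by simp
              have hneg : (1 - zs).re < 0 := by rw [hre1]; linarith
              rw [abs_real_im0 him1, abs_of_neg hneg, hre1,
                div_eq_iff (by linarith : -(1 - zs.re) ≠ 0)]
              ring
            rw [hval, Real.arccos_neg_one] at harccos
            apply harccos.congr
            intro n
            exact (absArg (hx1ne0 n)).symm
          -- Re part
          have habszs : ‖zs‖ = zs.re := by
            rw [abs_real_im0 him0, abs_of_pos (by linarith)]
          have habs1zs : ‖(1 - zs)‖ = zs.re - 1 := by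
            have him1 : (1 - zs).im = 0 := by simp [him0]
            rw [abs_real_im0 him1]
            have : (1 - zs).re = 1 - zs.re := by simp
            rw [this, abs_of_neg (by linarith)]
            ring
          set rstar := α * Real.log zs.re - Real.log (zs.re - 1) with hrstar
          have hRe : Tendsto (fun n => (Yf α (x n)).re) atTop (𝓝 rstar) := by
            have hl1 : Tendsto (fun n => Real.log (‖(x n)‖)) atTop
                (𝓝 (Real.log (‖zs‖))) :=
              ((Real.continuousAt_log (norm_ne_zero_iff.mpr hzsne)).tendsto).comp habs
            have hl2 : Tendsto (fun n => Real.log (‖(1 - x n)‖)) atTop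
                (𝓝 (Real.log (‖(1 - zs)‖))) :=
              ((Real.continuousAt_log habsne1).tendsto).comp habs1
            have h := (hl1.const_mul α).sub hl2
            rw [habszs, habs1zs] at h
            apply h.congr
            intro n
            rw [yRe]
          -- Im² part
          have hImsq : Tendsto (fun n => ((Yf α (x n)).im)^2) atTop (𝓝 (Real.pi^2)) := by
            have hu : Tendsto (fun n => α * (x n).arg) atTop (𝓝 0) := by
              have := hargz.const_mul α
              simpa using this
            have hvsq : Tendsto (fun n => ((1 - x n).arg)^2) atTop (𝓝 (Real.pi^2)) := by
              have h := hargabs1.pow 2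
              apply h.congr
              intro n
              exact sq_abs _
            have huv : Tendsto (fun n => (α * (x n).arg) * ((1 - x n).arg)) atTop (𝓝 0) := by
              have hb : ∀ n, ‖(α * (x n).arg) * ((1 - x n).arg)‖ ≤ |α * (x n).arg| * Real.pi := by
                intro n
                rw [Real.norm_eq_abs, abs_mul]
                exact mul_le_mul_of_nonneg_left (Complex.abs_arg_le_pi _) (abs_nonneg _)
              have hg : Tendsto (fun n => |α * (x n).arg| * Real.pi) atTop (𝓝 0) := by
                simpa using (hu.abs).mul_const Real.pi
              exact squeeze_zero_norm hb hg
            have hcomb : Tendsto (fun n => (α * (x n).arg)^2 - 2*((α * (x n).arg) * ((1 - x n).arg)) + ((1 - x n).arg)^2) atTop (𝓝 (0^2 - 2*0 + Real.pi^2)) := by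
              exact ((hu.pow 2).sub (huv.const_mul 2)).add hvsq
            simp only [ne_eq, OfNat.ofNat_ne_zero, not_false_eq_true, zero_pow, mul_zero,
              sub_zero, zero_add] at hcomb
            apply hcomb.congr
            intro n
            rw [yIm]
            ring
          have habsY2 : Tendsto (fun n => (‖(Yf α (x n))‖)^2) atTop
              (𝓝 (rstar^2 + Real.pi^2)) := by
            have h := (hRe.pow 2).add hImsq
            apply h.congr
            intro n
            rw [sq_abs_c]
          have hle : rstar^2 + Real.pi^2 ≤ r^2 := by
            apply le_of_tendsto habsY2
            apply Eventually.of_forall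
            intro n
            have h1 : ‖(Yf α (x n))‖ ≤ r := hYb n
            nlinarith [norm_nonneg (Yf α (x n))]
          have hbern := bern hα1 htgt
          rw [← hrstar] at hbern
          have hc0 := c_nonneg hα1
          have hsq : (cC α)^2 ≤ rstar^2 := by nlinarith
          have hρr : rhoC α ≤ r := by
            rw [rhoC, show r = Real.sqrt (r^2) from (Real.sqrt_sq hr0).symm]
            apply Real.sqrt_le_sqrt
            linarith
          linarith
    refine ⟨hzs, ?_⟩
    have hYt : Tendsto (fun n => Yf α (x n)) atTop (𝓝 (Yf α zs)) :=
      (yCont hzs).tendsto.comp hlim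
    have : Tendsto (fun n => ‖(Yf α (x n))‖) atTop (𝓝 (‖(Yf α zs)‖)) :=
      (continuous_norm.tendsto _).comp hYt
    exact le_of_tendsto this (Eventually.of_forall hYb)
  apply Metric.isCompact_of_isClosed_isBounded hclosed
  apply (Metric.isBounded_closedBall (x := (0:ℂ)) (r := R)).subset
  intro z hz
  simp only [Metric.mem_closedBall]
  rw [dist_zero_right]
  exact hbdd z hz

set_option maxHeartbeats 1000000 in
lemma seqLimit {α : ℝ} (hα1 : 1 < α) {w : ℕ → ℂ} {w0 : ℂ}
    (hw : Tendsto w atTop (𝓝 w0)) (h0 : ‖w0‖ < rhoC α)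
    {z : ℕ → ℂ} (hz : ∀ n, z n ∈ Om ∧ Yf α (z n) = w n) :
    ∃ z0, z0 ∈ Om ∧ Yf α z0 = w0 ∧
      ∃ φ : ℕ → ℕ, StrictMono φ ∧ Tendsto (z ∘ φ) atTop (𝓝 z0) := by
  have hρpos : 0 < rhoC α := lt_of_lt_of_le Real.pi_pos pi_le_rho
  set r := (‖w0‖ + rhoC α)/2 with hrdef
  have hr0 : 0 ≤ r := by
    have := norm_nonneg w0
    rw [hrdef]; linarith
  have hrρ : r < rhoC α := by rw [hrdef]; linarith
  have hev : ∀ᶠ n in atTop, ‖(w n)‖ ≤ r := by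
    have h1 : Tendsto (fun n => ‖(w n)‖) atTop (𝓝 (‖w0‖)) :=
      (continuous_norm.tendsto w0).comp hw
    exact h1.eventually (eventually_le_nhds (by rw [hrdef]; linarith))
  obtain ⟨N, hN⟩ := eventually_atTop.mp hev
  set y : ℕ → ℂ := fun k => z (k + N) with hy
  have hyS : ∀ k, y k ∈ {ζ : ℂ | ζ ∈ Om ∧ ‖(Yf α ζ)‖ ≤ r} := by
    intro k
    refine ⟨(hz _).1, ?_⟩
    rw [(hz _).2]
    exact hN _ (Nat.le_add_left N k)
  obtain ⟨z0, hz0S, φ', hφ', hconv⟩ := (compactS hα1 hr0 hrρ).tendsto_subseq hyS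
  have hφt : Tendsto (fun k => φ' k + N) atTop atTop :=
    (hφ'.add_const N).tendsto_atTop
  have hYlim : Yf α z0 = w0 := by
    have h1 : Tendsto (fun k => Yf α (y (φ' k))) atTop (𝓝 (Yf α z0)) :=
      ((yCont hz0S.1).tendsto).comp hconv
    have h2 : Tendsto (fun k => w (φ' k + N)) atTop (𝓝 w0) := hw.comp hφt
    refine tendsto_nhds_unique (h1.congr fun k => ?_) h2
    exact (hz (φ' k + N)).2
  exact ⟨z0, hz0S.1, hYlim, fun k => φ' k + N, hφ'.add_const N, hconv⟩

lemma yReal {α t : ℝ} (h0 : 0 < t) (h1 : t < 1) :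
    Yf α (t:ℂ) = ((α * Real.log t - Real.log (1 - t) : ℝ) : ℂ) := by
  unfold Yf
  rw [show ((1:ℂ) - (t:ℂ)) = ((1 - t : ℝ) : ℂ) by push_cast; ring]
  rw [← Complex.ofReal_log h0.le, ← Complex.ofReal_log (by linarith : (0:ℝ) ≤ 1 - t)]
  push_cast; ring

lemma om_real {a : ℝ} (ha0 : 0 < a) (ha1 : a < 1) : (a:ℂ) ∈ Om := by
  right
  simp only [Complex.ofReal_re]
  exact ⟨ha0, ha1⟩

lemma fibera {α a : ℝ} (ha0 : 0 < a) (ha1 : a < 1)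
    (hab : α * Real.log a = Real.log (1 - a)) : Yf α (a:ℂ) = 0 := by
  rw [yReal ha0 ha1, show α * Real.log a - Real.log (1-a) = 0 from by linarith,
    Complex.ofReal_zero]

lemma fiber0 {α a : ℝ} (hα1 : 1 < α) (ha0 : 0 < a) (ha1 : a < 1)
    (hab : α * Real.log a = Real.log (1 - a)) :
    ∀ z ∈ Om, Yf α z = 0 → z = (a:ℂ) := by
  intro z hz hY
  have hα0 : (0:ℝ) < α := by linarith
  have him : α * z.arg - (1 - z).arg = 0 := by
    rw [← yIm, hY]; rfl
  have himz : z.im = 0 := by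
    rcases lt_trichotomy z.im 0 with hlt | heq | hgt
    · have h1 : z.arg < 0 := Complex.arg_neg_iff.mpr hlt
      have h2 : 0 ≤ (1 - z).arg := Complex.arg_nonneg_iff.mpr (by simp; linarith)
      nlinarith
    · exact heq
    · have h1 : 0 ≤ z.arg := Complex.arg_nonneg_iff.mpr hgt.le
      have h1' : z.arg ≠ 0 := by
        intro h
        have := (Complex.arg_eq_zero_iff.mp h).2
        linarith
      have h2 : (1 - z).arg < 0 := Complex.arg_neg_iff.mpr (by simp; linarith)
      have h3 : 0 < z.arg := lt_of_le_of_ne h1 (Ne.symm h1')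
      nlinarith
  have hre : 0 < z.re ∧ z.re < 1 := by
    rcases hz with h | h
    · exact absurd himz h
    · exact h
  have hzt : z = ((z.re : ℝ) : ℂ) := by
    apply Complex.ext
    · simp
    · simp [himz]
  rw [hzt, yReal hre.1 hre.2] at hY
  have hreq : α * Real.log z.re - Real.log (1 - z.re) = 0 := by exact_mod_cast hY
  have hmono : StrictMonoOn (fun t : ℝ => α * Real.log t - Real.log (1 - t)) (Set.Ioo 0 1) := by
    intro s hs t ht hst
    have h1 : Real.log s < Real.log t := Real.log_lt_log hs.1 hst
    have h2 : Real.log (1 - t) < Real.log (1 - s) := Real.log_lt_log (by linarith [ht.2]) (by linarith)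
    show α * Real.log s - Real.log (1 - s) < α * Real.log t - Real.log (1 - t)
    nlinarith
  have := hmono.injOn (Set.mem_Ioo.mpr hre) (Set.mem_Ioo.mpr ⟨ha0, ha1⟩)
    (show α * Real.log z.re - Real.log (1 - z.re) = α * Real.log a - Real.log (1 - a) by linarith)
  rw [hzt, this]

lemma localdata {α : ℝ} (hα1 : 1 < α) {z0 : ℂ} (hz0 : z0 ∈ Om) :
    ∃ g : ℂ → ℂ, ContinuousAt g (Yf α z0) ∧ g (Yf α z0) = z0 ∧
      (∀ᶠ w in 𝓝 (Yf α z0), Yf α (g w) = w) ∧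
      (∀ᶠ ζ in 𝓝 z0, g (Yf α ζ) = ζ) ∧
      HasStrictDerivAt g (yd α z0)⁻¹ (Yf α z0) := by
  have hst : HasStrictDerivAt (Yf α) (yd α z0) z0 := yStrict hz0
  have hne : yd α z0 ≠ 0 := ydne hα1 hz0
  have hfd := hst.hasStrictFDerivAt_equiv hne
  exact ⟨hst.localInverse (Yf α) (yd α z0) z0 hne,
    hfd.localInverse_continuousAt,
    hfd.localInverse_apply_image,
    hfd.eventually_right_inverse,
    hfd.eventually_left_inverse,
    hst.to_localInverse hne⟩

set_option maxHeartbeats 2000000 in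
lemma existsUnique_fiber {α a : ℝ} (hα1 : 1 < α) (ha0 : 0 < a) (ha1 : a < 1)
    (hab : α * Real.log a = Real.log (1 - a)) :
    ∀ w : ℂ, ‖w‖ < rhoC α → ∃! z, z ∈ Om ∧ Yf α z = w := by
  have hρpos : 0 < rhoC α := lt_of_lt_of_le Real.pi_pos pi_le_rho
  set B := Metric.ball (0:ℂ) (rhoC α) with hB
  have hmem : ∀ u : ℂ, u ∈ B ↔ ‖u‖ < rhoC α := by
    intro u
    rw [hB, Metric.mem_ball, Complex.dist_eq, sub_zero]
  have hBopen : IsOpen B := Metric.isOpen_ball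
  set P : ℂ → ℂ → Prop := fun w ζ => ζ ∈ Om ∧ Yf α ζ = w with hP
  set U := {w : ℂ | w ∈ B ∧ (∃ ζ, P w ζ) ∧ ∀ ζ1 ζ2, P w ζ1 → P w ζ2 → ζ1 = ζ2} with hU
  set V := {w : ℂ | w ∈ B ∧ ((∀ ζ, ¬ P w ζ) ∨ ∃ ζ1 ζ2, ζ1 ≠ ζ2 ∧ P w ζ1 ∧ P w ζ2)} with hV
  have hseq : ∀ {w0 : ℂ} {Q : ℂ → Prop}, (¬ ∀ᶠ u in 𝓝 w0, Q u) →
      ∃ v : ℕ → ℂ, (∀ n, ¬ Q (v n)) ∧ Tendsto v atTop (𝓝 w0) := by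
    intro w0 Q hQ
    rw [Filter.not_eventually] at hQ
    have hcl : w0 ∈ closure {u | ¬ Q u} := mem_closure_iff_frequently.mpr hQ
    obtain ⟨v, hv1, hv2⟩ := mem_closure_iff_seq_limit.mp hcl
    exact ⟨v, hv1, hv2⟩
  have hUopen : IsOpen U := by
    rw [isOpen_iff_mem_nhds]
    rintro w0 ⟨hw0B, ⟨z0, hz0⟩, huniq⟩
    obtain ⟨g, hgc, hgi, hgr, hgl, hgd⟩ := localdata hα1 hz0.1
    rw [hz0.2] at hgc hgi hgr hgd
    have hOmev : ∀ᶠ u in 𝓝 w0, g u ∈ Om := hgc (omOpen.mem_nhds (by rw [hgi]; exact hz0.1))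
    have hex : ∀ᶠ u in 𝓝 w0, ∃ ζ, P u ζ := by
      filter_upwards [hOmev, hgr] with u h1 h2
      exact ⟨g u, h1, h2⟩
    have huq : ∀ᶠ u in 𝓝 w0, ∀ ζ1 ζ2, P u ζ1 → P u ζ2 → ζ1 = ζ2 := by
      by_contra hcon
      obtain ⟨v, hv1, hv2⟩ := hseq hcon
      have hpairs : ∀ n, ∃ ζ1 ζ2, ζ1 ≠ ζ2 ∧ P (v n) ζ1 ∧ P (v n) ζ2 := by
        intro n
        have h := hv1 n
        push_neg at h
        obtain ⟨ζ1, ζ2, h1, h2, h3⟩ := h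
        exact ⟨ζ1, ζ2, h3, h1, h2⟩
      choose z1 z2 hne12 hP1 hP2 using hpairs
      have hw0ρ : ‖w0‖ < rhoC α := (hmem w0).mp hw0B
      obtain ⟨ζ1, hζ1Om, hζ1Y, φ1, hφ1, hconv1⟩ := seqLimit hα1 hv2 hw0ρ hP1
      have hζ1 : ζ1 = z0 := huniq _ _ ⟨hζ1Om, hζ1Y⟩ hz0
      obtain ⟨ζ2, hζ2Om, hζ2Y, φ2, hφ2, hconv2⟩ :=
        seqLimit hα1 (hv2.comp hφ1.tendsto_atTop) hw0ρ (fun n => hP2 (φ1 n))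
      have hζ2 : ζ2 = z0 := huniq _ _ ⟨hζ2Om, hζ2Y⟩ hz0
      rw [hζ1] at hconv1
      rw [hζ2] at hconv2
      obtain ⟨T, hTp, hTopen, hTz0⟩ := eventually_nhds_iff.mp hgl
      have h1ev : ∀ᶠ k in atTop, z1 (φ1 (φ2 k)) ∈ T := by
        have := (hconv1.comp hφ2.tendsto_atTop) (hTopen.mem_nhds hTz0)
        exact this
      have h2ev : ∀ᶠ k in atTop, z2 (φ1 (φ2 k)) ∈ T := hconv2 (hTopen.mem_nhds hTz0)
      obtain ⟨k, hk1, hk2⟩ := (h1ev.and h2ev).exists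
      apply hne12 (φ1 (φ2 k))
      have e1 : g (Yf α (z1 (φ1 (φ2 k)))) = z1 (φ1 (φ2 k)) := hTp _ hk1
      have e2 : g (Yf α (z2 (φ1 (φ2 k)))) = z2 (φ1 (φ2 k)) := hTp _ hk2
      rw [(hP1 (φ1 (φ2 k))).2] at e1
      rw [(hP2 (φ1 (φ2 k))).2] at e2
      rw [← e1, ← e2]
    have hball : ∀ᶠ u in 𝓝 w0, u ∈ B := hBopen.mem_nhds hw0B
    have : ∀ᶠ u in 𝓝 w0, u ∈ U := by
      filter_upwards [hball, hex, huq] with u h1 h2 h3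
      exact ⟨h1, h2, h3⟩
    exact Filter.eventually_mem_set.mp this
  have hVopen : IsOpen V := by
    rw [isOpen_iff_mem_nhds]
    rintro w0 ⟨hw0B, hcase⟩
    have hball : ∀ᶠ u in 𝓝 w0, u ∈ B := hBopen.mem_nhds hw0B
    rcases hcase with hempty | ⟨ζ1, ζ2, h12, h1, h2⟩
    · have hev : ∀ᶠ u in 𝓝 w0, ∀ ζ, ¬ P u ζ := by
        by_contra hcon
        obtain ⟨v, hv1, hv2⟩ := hseq hcon
        have hex : ∀ n, ∃ ζ, P (v n) ζ := by
          intro n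
          have h := hv1 n
          push_neg at h
          exact h
        choose zz hzz using hex
        obtain ⟨ζ0, hζOm, hζY, _, _, _⟩ := seqLimit hα1 hv2 ((hmem w0).mp hw0B) hzz
        exact hempty ζ0 ⟨hζOm, hζY⟩
      have : ∀ᶠ u in 𝓝 w0, u ∈ V := by
        filter_upwards [hball, hev] with u h1 h2
        exact ⟨h1, Or.inl h2⟩
      exact Filter.eventually_mem_set.mp this
    · obtain ⟨g1, hg1c, hg1i, hg1r, _, _⟩ := localdata hα1 h1.1
      obtain ⟨g2, hg2c, hg2i, hg2r, _, _⟩ := localdata hα1 h2.1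
      rw [h1.2] at hg1c hg1i hg1r
      rw [h2.2] at hg2c hg2i hg2r
      have hg1Om : ∀ᶠ u in 𝓝 w0, g1 u ∈ Om :=
        hg1c (omOpen.mem_nhds (by rw [hg1i]; exact h1.1))
      have hg2Om : ∀ᶠ u in 𝓝 w0, g2 u ∈ Om :=
        hg2c (omOpen.mem_nhds (by rw [hg2i]; exact h2.1))
      have hdist : ∀ᶠ u in 𝓝 w0, g1 u ≠ g2 u := by
        have hd : ContinuousAt (fun u => dist (g1 u) (g2 u)) w0 := hg1c.dist hg2c
        have hd' : Tendsto (fun u => dist (g1 u) (g2 u)) (𝓝 w0) (𝓝 (dist ζ1 ζ2)) := by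
          have := hd.tendsto
          rwa [hg1i, hg2i] at this
        have hpos : 0 < dist ζ1 ζ2 := dist_pos.mpr h12
        exact (hd'.eventually (eventually_gt_nhds hpos)).mono fun u hu => dist_pos.mp hu
      have : ∀ᶠ u in 𝓝 w0, u ∈ V := by
        filter_upwards [hball, hdist, hg1Om, hg2Om, hg1r, hg2r] with u hB' hne' h1' h2' hr1 hr2
        exact ⟨hB', Or.inr ⟨g1 u, g2 u, hne', ⟨h1', hr1⟩, ⟨h2', hr2⟩⟩⟩
      exact Filter.eventually_mem_set.mp this
  have hdisj : Disjoint U V := by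
    rw [Set.disjoint_left]
    rintro w ⟨hwB, ⟨z0, hz0⟩, huniq⟩ ⟨_, hcase⟩
    rcases hcase with hempty | ⟨ζ1, ζ2, h12, h1, h2⟩
    · exact hempty z0 hz0
    · exact h12 (huniq _ _ h1 h2)
  have hcover : B ⊆ U ∪ V := by
    intro w hw
    by_cases hex : ∃ ζ, P w ζ
    · by_cases huq : ∀ ζ1 ζ2, P w ζ1 → P w ζ2 → ζ1 = ζ2
      · exact Or.inl ⟨hw, hex, huq⟩
      · push_neg at huq
        obtain ⟨ζ1, ζ2, h1, h2, h3⟩ := huq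
        exact Or.inr ⟨hw, Or.inr ⟨ζ1, ζ2, h3, h1, h2⟩⟩
    · push_neg at hex
      exact Or.inr ⟨hw, Or.inl hex⟩
  have h0B : (0:ℂ) ∈ B := by rw [hmem]; simpa using hρpos
  have h0U : (0:ℂ) ∈ U := by
    refine ⟨h0B, ⟨(a:ℂ), om_real ha0 ha1, fibera ha0 ha1 hab⟩, ?_⟩
    intro ζ1 ζ2 hζ1 hζ2
    rw [fiber0 hα1 ha0 ha1 hab ζ1 hζ1.1 hζ1.2, fiber0 hα1 ha0 ha1 hab ζ2 hζ2.1 hζ2.2]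
  have hBU : B ⊆ U :=
    (Convex.isPreconnected (convex_ball 0 _)).subset_left_of_subset_union
      hUopen hVopen hdisj hcover ⟨0, h0B, h0U⟩
  intro w hw
  obtain ⟨hwB, ⟨z0, hz0⟩, huniq⟩ := hBU ((hmem w).mpr hw)
  exact ⟨z0, hz0, fun ζ hζ => huniq ζ z0 hζ hz0⟩

lemma yConj {α : ℝ} {z : ℂ} (hz : z ∈ Om) :
    Yf α ((starRingEnd ℂ) z) = (starRingEnd ℂ) (Yf α z) := by
  unfold Yf
  rw [Complex.log_conj _ (om_arg_ne_pi hz)]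
  have h1 : (1 : ℂ) - (starRingEnd ℂ) z = (starRingEnd ℂ) (1 - z) := by
    rw [map_sub, map_one]
  rw [h1, Complex.log_conj _ (om_arg_ne_pi (om_one_sub hz)), map_sub, map_mul,
    Complex.conj_ofReal]

end DeltaAux

set_option maxHeartbeats 1600000 in
/-- The implicitly defined function `Δ(x)` with
`e^{-w₁D} e^{-w₁Δ(x)} + e^{-w₂D} e^{-x} e^{-w₂Δ(x)} = 1`, `Δ(0) = 0`, is analytic on the
disc of radius `ρ = |−α log α + (α−1) log(α−1) + πi| ≥ π` about `0`, is real on the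
reals, and has Taylor expansion
`Δ(x) = -(e^{-w₂D}/f'(D)) x + (w₁² e^{-w₁D} e^{-w₂D}/(2 f'(D)³)) x² + O(x³)` at `0`;
the coefficient of `x` is negative and the coefficient of `x²` is positive. -/
theorem implicit_function_Delta (w1 w2 : ℝ) (hw1 : 0 < w1) (hw12 : w1 < w2)
    (α : ℝ) (hα : α = w2 / w1) (hα1 : 1 < α) (hirr : Irrational α)
    (D : ℝ) (hD : Real.exp (-w1 * D) + Real.exp (-w2 * D) = 1) (hDpos : 0 < D)
    (fD : ℝ) (hfD : fD = w1 * Real.exp (-w1 * D) + w2 * Real.exp (-w2 * D)) :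
    ∃ (Δ : ℂ → ℂ) (ρ : ℝ),
      ρ = ‖(((-(α * Real.log α) + (α - 1) * Real.log (α - 1) : ℝ)
            + (Real.pi : ℂ) * Complex.I) : ℂ)‖ ∧
      Real.pi ≤ ρ ∧
      AnalyticOn ℂ Δ (Metric.ball (0 : ℂ) ρ) ∧
      Δ 0 = 0 ∧
      (∀ x ∈ Metric.ball (0 : ℂ) ρ,
        Complex.exp (-(w1 : ℂ) * (D : ℂ)) * Complex.exp (-(w1 : ℂ) * Δ x)
          + Complex.exp (-(w2 : ℂ) * (D : ℂ)) * Complex.exp (-x)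
              * Complex.exp (-(w2 : ℂ) * Δ x) = 1) ∧
      (∀ t : ℝ, (t : ℂ) ∈ Metric.ball (0 : ℂ) ρ → (Δ (t : ℂ)).im = 0) ∧
      (fun x : ℂ => Δ x - (((-(Real.exp (-w2 * D) / fD) : ℝ) : ℂ) * x
          + ((w1 ^ 2 * Real.exp (-w1 * D) * Real.exp (-w2 * D) / (2 * fD ^ 3) : ℝ) : ℂ) * x ^ 2))
        =O[nhds (0 : ℂ)] (fun x : ℂ => x ^ 3) ∧
      (-(Real.exp (-w2 * D) / fD) < 0) ∧
      (0 < w1 ^ 2 * Real.exp (-w1 * D) * Real.exp (-w2 * D) / (2 * fD ^ 3)) := by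
  have hw1ne : w1 ≠ 0 := ne_of_gt hw1
  have hw2pos : 0 < w2 := lt_trans hw1 hw12
  set a := Real.exp (-w1 * D) with hadef
  set b := Real.exp (-w2 * D) with hbdef
  have ha0 : 0 < a := Real.exp_pos _
  have hb0 : 0 < b := Real.exp_pos _
  have hsum : a + b = 1 := hD
  have ha1 : a < 1 := by linarith
  have hb : b = 1 - a := by linarith
  have hw2 : w2 = α * w1 := by rw [hα]; field_simp
  have hloga : Real.log a = -w1 * D := Real.log_exp _
  have hlogb : Real.log b = -w2 * D := Real.log_exp _
  have hab : α * Real.log a = Real.log (1 - a) := by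
    rw [hloga, ← hb, hlogb, hw2]; ring
  have hfD0 : 0 < fD := by rw [hfD]; positivity
  have key := existsUnique_fiber hα1 ha0 ha1 hab
  have hρpos : 0 < rhoC α := lt_of_lt_of_le Real.pi_pos pi_le_rho
  have hmem : ∀ u : ℂ, u ∈ Metric.ball (0:ℂ) (rhoC α) ↔ ‖u‖ < rhoC α := by
    intro u; rw [Metric.mem_ball, Complex.dist_eq, sub_zero]
  set ψ : ℂ → ℂ := fun w => Classical.epsilon (fun z => z ∈ Om ∧ Yf α z = w) with hψdef
  have hψ : ∀ w : ℂ, ‖w‖ < rhoC α → ψ w ∈ Om ∧ Yf α (ψ w) = w := by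
    intro w hw
    exact Classical.epsilon_spec (key w hw).exists
  have hψu : ∀ w : ℂ, ‖w‖ < rhoC α → ∀ z, z ∈ Om ∧ Yf α z = w → z = ψ w := by
    intro w hw z hz
    exact (key w hw).unique hz (hψ w hw)
  set Δf : ℂ → ℂ := fun x => -(D:ℂ) - (w1:ℂ)⁻¹ * Complex.log (ψ x) with hΔdef
  have h00 : ‖(0:ℂ)‖ < rhoC α := by simpa using hρpos
  have hψ0 : ψ 0 = (a:ℂ) := fiber0 hα1 ha0 ha1 hab _ (hψ 0 h00).1 (hψ 0 h00).2
  -- differentiability of ψ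
  have hψd : ∀ x : ℂ, ‖x‖ < rhoC α → HasDerivAt ψ (yd α (ψ x))⁻¹ x := by
    intro x hx
    obtain ⟨g, hgc, hgi, hgr, hgl, hgd⟩ := localdata hα1 (hψ x hx).1
    rw [(hψ x hx).2] at hgc hgi hgr hgd
    have hOmev : ∀ᶠ u in 𝓝 x, g u ∈ Om :=
      hgc (omOpen.mem_nhds (by rw [hgi]; exact (hψ x hx).1))
    have hballev : ∀ᶠ u in 𝓝 x, ‖u‖ < rhoC α := by
      have h1 : ∀ᶠ u in 𝓝 x, u ∈ Metric.ball (0:ℂ) (rhoC α) :=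
        Metric.isOpen_ball.eventually_mem ((hmem x).mpr hx)
      filter_upwards [h1] with u hu
      exact (hmem u).mp hu
    have hEq : ψ =ᶠ[𝓝 x] g := by
      filter_upwards [hOmev, hgr, hballev] with u h1 h2 h3
      exact (hψu u h3 (g u) ⟨h1, h2⟩).symm
    exact hgd.hasDerivAt.congr_of_eventuallyEq hEq
  have hΔdiffAt : ∀ x : ℂ, ‖x‖ < rhoC α → DifferentiableAt ℂ Δf x := by
    intro x hx
    have h1 : DifferentiableAt ℂ (fun u => Complex.log (ψ u)) x :=
      (Complex.differentiableAt_log (om_slit (hψ x hx).1)).comp x (hψd x hx).differentiableAt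
    exact DifferentiableAt.const_sub (h1.const_mul ((w1:ℂ)⁻¹)) (-(D:ℂ))
  have hanalNhd : AnalyticOnNhd ℂ Δf (Metric.ball (0:ℂ) (rhoC α)) := by
    apply DifferentiableOn.analyticOnNhd _ Metric.isOpen_ball
    intro x hx
    exact (hΔdiffAt x ((hmem x).mp hx)).differentiableWithinAt
  -- derivative closed form
  set Ef : ℂ → ℂ := fun x => -(w1:ℂ)⁻¹ * ((1 - ψ x) * ((α:ℂ) - ((α:ℂ) - 1) * ψ x)⁻¹)
    with hEdef
  have hαz : ∀ z : ℂ, z ∈ Om → (α:ℂ) - ((α:ℂ) - 1) * z ≠ 0 := by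
    intro z hz h
    apply ydne hα1 hz
    have h1 : yd α z * (z * (1 - z)) = (α:ℂ) - ((α:ℂ)-1) * z := by
      unfold yd
      field_simp [om_ne_zero hz, om_one_sub_ne hz]
      ring
    have h2 : yd α z * (z * (1-z)) = 0 := by rw [h1, h]
    rcases mul_eq_zero.mp h2 with h3 | h3
    · exact h3
    · exact absurd h3 (mul_ne_zero (om_ne_zero hz) (om_one_sub_ne hz))
  have hΔE : ∀ x : ℂ, ‖x‖ < rhoC α → HasDerivAt Δf (Ef x) x := by
    intro x hx
    have hz := (hψ x hx).1
    have hlog : HasDerivAt Complex.log (ψ x)⁻¹ (ψ x) := Complex.hasDerivAt_log (om_slit hz)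
    have hcomp : HasDerivAt (fun u => Complex.log (ψ u)) ((ψ x)⁻¹ * (yd α (ψ x))⁻¹) x :=
      hlog.comp x (hψd x hx)
    have h1 : HasDerivAt Δf (-((w1:ℂ)⁻¹ * ((ψ x)⁻¹ * (yd α (ψ x))⁻¹))) x :=
      (hcomp.const_mul ((w1:ℂ)⁻¹)).const_sub (-(D:ℂ))
    convert h1 using 1
    have hydv : yd α (ψ x) * (ψ x * (1 - ψ x)) = (α:ℂ) - ((α:ℂ)-1) * ψ x := by
      unfold yd
      field_simp [om_ne_zero hz, om_one_sub_ne hz]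
      ring
    have hinv : (yd α (ψ x))⁻¹ = ψ x * (1 - ψ x) * ((α:ℂ) - ((α:ℂ)-1) * ψ x)⁻¹ := by
      apply inv_eq_of_mul_eq_one_right
      calc yd α (ψ x) * (ψ x * (1 - ψ x) * ((α:ℂ) - ((α:ℂ)-1) * ψ x)⁻¹)
          = (yd α (ψ x) * (ψ x * (1 - ψ x))) * ((α:ℂ) - ((α:ℂ)-1) * ψ x)⁻¹ := by ring
        _ = 1 := by rw [hydv]; exact mul_inv_cancel₀ (hαz _ hz)
    rw [hEdef, hinv]
    have hz0 : ψ x ≠ 0 := om_ne_zero hz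
    field_simp
  -- value of E at 0 and second derivative data
  have hden2 : α - (α-1)*a ≠ 0 := by nlinarith
  have hfD' : fD = w1*a + α*w1*(1-a) := by rw [hfD, hw2, hb]
  have hdenC : ((α:ℝ):ℂ) - (((α:ℝ):ℂ) - 1) * ((a:ℝ):ℂ) = (((α - (α-1)*a : ℝ)):ℂ) := by
    push_cast; ring
  have hΔf0 : Δf 0 = 0 := by
    have hlogA : Complex.log ((a:ℝ):ℂ) = (((-w1*D : ℝ)):ℂ) := by
      rw [← Complex.ofReal_log ha0.le, hloga]
    rw [hΔdef]
    simp only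
    rw [hψ0, hlogA]
    have : ((w1:ℝ):ℂ) ≠ 0 := Complex.ofReal_ne_zero.mpr hw1ne
    field_simp
    push_cast
    ring
  have hrfd : w1 * (α-(α-1)*a) = fD := by rw [hfD']; ring
  have hc1real : -(w1⁻¹*((1-a)*(α-(α-1)*a)⁻¹)) = -(b/fD) := by
    rw [hb, ← hrfd, div_eq_mul_inv, mul_inv]
    ring
  have hc1 : Ef 0 = ((-(b/fD) : ℝ) : ℂ) := by
    rw [hEdef]
    simp only
    rw [hψ0, hdenC, ← hc1real]
    push_cast
    ring
  -- second derivative of Δ at 0 via deriv of E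
  set d0 : ℂ := (yd α (ψ 0))⁻¹ with hd0def
  have hydR : (α/a + 1/(1-a)) = fD/(w1*a*(1-a)) := by
    rw [hfD']
    have h1 : a ≠ 0 := ne_of_gt ha0
    have h2 : (1:ℝ) - a ≠ 0 := by linarith
    field_simp
    ring
  have hydC : yd α ((a:ℝ):ℂ) = (((α/a + 1/(1-a) : ℝ)):ℂ) := by
    unfold yd
    push_cast
    ring
  have hd0cast : d0 = (((w1*a*(1-a)/fD : ℝ)):ℂ) := by
    rw [hd0def, hψ0, hydC, hydR, ← Complex.ofReal_inv, inv_div]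
  have hψd0 : HasDerivAt ψ d0 0 := hψd 0 h00
  have hane : ((α:ℝ):ℂ) - (((α:ℝ):ℂ) - 1) * ψ 0 ≠ 0 := by
    rw [hψ0]
    exact hαz _ (om_real ha0 ha1)
  have hE0d : HasDerivAt Ef
      (-(w1:ℂ)⁻¹ * ((-d0) * ((α:ℂ) - ((α:ℂ) - 1) * ψ 0)⁻¹
        + (1 - ψ 0) * (-(-(((α:ℂ) - 1) * d0)) / ((α:ℂ) - ((α:ℂ) - 1) * ψ 0)^2))) 0 := by
    have h1 : HasDerivAt (fun u => (1:ℂ) - ψ u) (-d0) 0 := hψd0.const_sub 1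
    have h2 : HasDerivAt (fun u => (α:ℂ) - ((α:ℂ)-1) * ψ u) (-(((α:ℂ)-1) * d0)) 0 :=
      (hψd0.const_mul ((α:ℂ)-1)).const_sub (α:ℂ)
    have h3 := h2.inv hane
    have h4 := h1.mul h3
    exact h4.const_mul (-(w1:ℂ)⁻¹)
  have hreal2 : -(w1⁻¹) * ((-(w1*a*(1-a)/fD)) * (α-(α-1)*a)⁻¹
      + (1-a) * (((α-1) * (w1*a*(1-a)/fD)) / (α-(α-1)*a)^2)) = w1^2*a*b/fD^3 := by
    rw [hb, hfD']
    have hw1a : w1*a + α*w1*(1-a) ≠ 0 := by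
      have h0' : (0:ℝ) < w1*a + α*w1*(1-a) := by nlinarith
      exact ne_of_gt h0'
    have h2 : (1:ℝ) - a ≠ 0 := by linarith
    field_simp
    ring
  have he2 : -(w1:ℂ)⁻¹ * ((-d0) * ((α:ℂ) - ((α:ℂ) - 1) * ψ 0)⁻¹
        + (1 - ψ 0) * (-(-(((α:ℂ) - 1) * d0)) / ((α:ℂ) - ((α:ℂ) - 1) * ψ 0)^2))
      = (((w1^2*a*b/fD^3 : ℝ)):ℂ) := by
    rw [hψ0, hd0cast, hdenC, ← hreal2]
    push_cast
    ring
  -- power series of Δ at 0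
  have hA0 : AnalyticAt ℂ Δf 0 := hanalNhd 0 ((hmem 0).mpr h00)
  obtain ⟨p, hp⟩ := hA0
  have hball0 : ∀ᶠ u in 𝓝 (0:ℂ), ‖u‖ < rhoC α := by
    have h1 : ∀ᶠ u in 𝓝 (0:ℂ), u ∈ Metric.ball (0:ℂ) (rhoC α) :=
      Metric.isOpen_ball.eventually_mem ((hmem 0).mpr h00)
    filter_upwards [h1] with u hu
    exact (hmem u).mp hu
  have hev : deriv Δf =ᶠ[𝓝 (0:ℂ)] Ef := by
    filter_upwards [hball0] with u hu
    exact (hΔE u hu).deriv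
  have hcoeff0 : p.coeff 0 = 0 := by
    have := hp.coeff_zero (fun _ => 1)
    rw [hΔf0] at this
    exact this
  have hcoeff1 : p.coeff 1 = ((-(b/fD) : ℝ) : ℂ) := by
    have h1 := hp.deriv
    have h2 : deriv Δf 0 = Ef 0 := (hΔE 0 h00).deriv
    rw [h2, hc1] at h1
    exact h1.symm
  have hcoeff2 : (2:ℂ) * p.coeff 2 = (((w1^2*a*b/fD^3 : ℝ)):ℂ) := by
    obtain ⟨rad, hball⟩ := hp
    have hfs := hball.factorial_smul (1:ℂ) 2
    have hiter : iteratedFDeriv ℂ 2 Δf 0 (fun _ => (1:ℂ)) = iteratedDeriv 2 Δf 0 := by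
      rw [iteratedDeriv_eq_iteratedFDeriv]
    have hit2 : iteratedDeriv 2 Δf 0 = deriv (deriv Δf) 0 := by
      rw [iteratedDeriv_succ, iteratedDeriv_one]
    have hdd : deriv (deriv Δf) 0 = deriv Ef 0 := Filter.EventuallyEq.deriv_eq hev
    have hder : deriv Ef 0 = (((w1^2*a*b/fD^3 : ℝ)):ℂ) := by
      rw [hE0d.deriv]
      exact he2
    rw [hiter, hit2, hdd, hder] at hfs
    have hp2 : (p 2 fun _ => (1:ℂ)) = p.coeff 2 := rfl
    rw [hp2] at hfs
    have hsm : (Nat.factorial 2) • p.coeff 2 = (2:ℂ) * p.coeff 2 := by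
      rw [nsmul_eq_mul]
      norm_num
    rw [hsm] at hfs
    exact hfs
  -- Big-O statement
  have hOfin : (fun x : ℂ => Δf x - (((-(b/fD) : ℝ) : ℂ) * x
      + ((w1 ^ 2 * a * b / (2 * fD ^ 3) : ℝ) : ℂ) * x ^ 2))
      =O[nhds (0 : ℂ)] (fun x : ℂ => x ^ 3) := by
    have hO := hp.isBigO_sub_partialSum_pow 3
    have hps : ∀ y : ℂ, p.partialSum 3 y = ((-(b/fD) : ℝ) : ℂ) * y
        + ((w1 ^ 2 * a * b / (2 * fD ^ 3) : ℝ) : ℂ) * y ^ 2 := by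
      intro y
      have hc2' : p.coeff 2 = ((w1 ^ 2 * a * b / (2 * fD ^ 3) : ℝ) : ℂ) := by
        have : (((w1 ^ 2 * a * b / (2 * fD ^ 3) : ℝ)):ℂ) = (((w1^2*a*b/fD^3 : ℝ)):ℂ) / 2 := by
          push_cast
          ring
        rw [this, ← hcoeff2]
        ring
      rw [FormalMultilinearSeries.partialSum]
      rw [Finset.sum_range_succ, Finset.sum_range_succ, Finset.sum_range_one]
      rw [p.apply_eq_pow_smul_coeff, p.apply_eq_pow_smul_coeff, p.apply_eq_pow_smul_coeff]
      rw [hcoeff0, hcoeff1, hc2']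
      simp [smul_eq_mul]
      ring
    have heq : (fun y : ℂ => Δf (0 + y) - p.partialSum 3 y)
        = (fun x : ℂ => Δf x - (((-(b/fD) : ℝ) : ℂ) * x
          + ((w1 ^ 2 * a * b / (2 * fD ^ 3) : ℝ) : ℂ) * x ^ 2)) := by
      funext y
      rw [zero_add, hps y]
    rw [heq] at hO
    apply hO.trans
    apply Asymptotics.isBigO_of_le
    intro y
    simp [norm_pow]
  -- the functional equation
  have hfeq : ∀ x : ℂ, ‖x‖ < rhoC α →
      Complex.exp (-(w1 : ℂ) * (D : ℂ)) * Complex.exp (-(w1 : ℂ) * Δf x)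
        + Complex.exp (-(w2 : ℂ) * (D : ℂ)) * Complex.exp (-x)
            * Complex.exp (-(w2 : ℂ) * Δf x) = 1 := by
    intro x hx
    have hzOm := (hψ x hx).1
    have hzY : (α:ℂ) * Complex.log (ψ x) - Complex.log (1 - ψ x) = x := (hψ x hx).2
    have hw1C : ((w1:ℝ):ℂ) ≠ 0 := Complex.ofReal_ne_zero.mpr hw1ne
    have hw2C : ((w2:ℝ):ℂ) = ((α:ℝ):ℂ) * ((w1:ℝ):ℂ) := by
      rw [hw2]; push_cast; ring
    have hexp1 : -(w1:ℂ) * (D:ℂ) + -(w1:ℂ) * Δf x = Complex.log (ψ x) := by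
      rw [hΔdef]
      simp only
      field_simp
      ring
    have hexp2a : -(w2:ℂ) * Δf x = (w2:ℂ)*(D:ℂ) + (α:ℂ) * Complex.log (ψ x) := by
      rw [hΔdef]
      simp only
      rw [hw2C]
      field_simp
      ring
    have hexp2 : -(w2:ℂ) * (D:ℂ) + -x + -(w2:ℂ) * Δf x = Complex.log (1 - ψ x) := by
      rw [hexp2a]
      linear_combination hzY
    have ht1 : Complex.exp (-(w1 : ℂ) * (D : ℂ)) * Complex.exp (-(w1 : ℂ) * Δf x) = ψ x := by
      rw [← Complex.exp_add, hexp1, Complex.exp_log (om_ne_zero hzOm)]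
    have ht2 : Complex.exp (-(w2 : ℂ) * (D : ℂ)) * Complex.exp (-x)
        * Complex.exp (-(w2 : ℂ) * Δf x) = 1 - ψ x := by
      rw [← Complex.exp_add, ← Complex.exp_add, hexp2,
        Complex.exp_log (om_one_sub_ne hzOm)]
    rw [ht1, ht2]
    ring
  -- realness
  have hreal : ∀ t : ℝ, ‖((t:ℝ):ℂ)‖ < rhoC α → (Δf ((t:ℝ):ℂ)).im = 0 := by
    intro t ht
    have hzOm := (hψ (t:ℂ) ht).1
    have hconjY : Yf α ((starRingEnd ℂ) (ψ (t:ℂ))) = (t:ℂ) := by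
      rw [yConj hzOm, (hψ (t:ℂ) ht).2, Complex.conj_ofReal]
    have heqc : (starRingEnd ℂ) (ψ (t:ℂ)) = ψ (t:ℂ) :=
      hψu (t:ℂ) ht _ ⟨om_conj hzOm, hconjY⟩
    have him : (ψ (t:ℂ)).im = 0 := by
      have h1 := congrArg Complex.im heqc
      simp only [Complex.conj_im] at h1
      linarith
    have hre : 0 < (ψ (t:ℂ)).re := by
      rcases hzOm with h | h
      · exact absurd him h
      · exact h.1
    have harg : (ψ (t:ℂ)).arg = 0 := Complex.arg_eq_zero_iff.mpr ⟨hre.le, him⟩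
    have hlogim : (Complex.log (ψ (t:ℂ))).im = 0 := by
      rw [Complex.log_im, harg]
    rw [hΔdef]
    simp only
    rw [← Complex.ofReal_inv]
    simp [Complex.sub_im, Complex.neg_im, Complex.ofReal_im, Complex.mul_im, hlogim]
  -- rho equation
  have hρeq : rhoC α = ‖((-(α * Real.log α) + (α - 1) * Real.log (α - 1) : ℝ)
      + (Real.pi : ℂ) * Complex.I)‖ := by
    rw [Complex.norm_def, Complex.normSq_apply]
    have hre : (((-(α * Real.log α) + (α - 1) * Real.log (α - 1) : ℝ) : ℂ)
        + (Real.pi : ℂ) * Complex.I).re = -(cC α) := by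
      simp [Complex.add_re, Complex.ofReal_re, Complex.mul_re, Complex.I_re, Complex.I_im,
        Complex.ofReal_im, cC]
      ring
    have him : (((-(α * Real.log α) + (α - 1) * Real.log (α - 1) : ℝ) : ℂ)
        + (Real.pi : ℂ) * Complex.I).im = Real.pi := by
      simp [Complex.add_im, Complex.ofReal_im, Complex.mul_im, Complex.I_re, Complex.I_im,
        Complex.ofReal_re]
    rw [hre, him, rhoC]
    congr 1
    ring
  refine ⟨Δf, rhoC α, hρeq, pi_le_rho, hanalNhd.analyticOn, hΔf0, ?_, ?_, hOfin, ?_, ?_⟩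
  · intro x hx
    exact hfeq x ((hmem x).mp hx)
  · intro t ht
    exact hreal t ((hmem _).mp ht)
  · exact neg_lt_zero.mpr (div_pos hb0 hfD0)
  · positivity
end
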